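/- arXiv:2305.11622 — 6 statements merged into one kernel-verified Lean document; each statement's English description precedes it below -/
import Mathlib

section
/- Let P be a weakly graded poset (i.e., there exists an order-preserving strictly monotone map r : P → ℤ). Then the poset obtained from P by adjoining a new minimum element 0 and a new maximum element 1 is a lattice if and only if P contains no bowtie, where a bowtie consists of four pairwise distinct elements a, b, c, d with a < c, a < d, b < c, b < d, and no element x with a ≤ x, b ≤ x, x ≤ c, x ≤ d. -/
/-- A bowtie in a poset: four pairwise distinct elements `a, b, c, d` with
`a, b` both strictly below both `c, d`, and no element between them. -/
def HasBowtie (P : Type*) [PartialOrder P] : Prop :=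
  ∃ a b c d : P, [a, b, c, d].Nodup ∧ a < c ∧ a < d ∧ b < c ∧ b < d ∧
    ¬ ∃ x : P, a ≤ x ∧ b ≤ x ∧ x ≤ c ∧ x ≤ d

section Aux

variable {P : Type*} [PartialOrder P]

lemma isLUB_pair_of_le' {α : Type*} [Preorder α] {a b : α} (h : a ≤ b) :
    IsLUB {a, b} b := by
  constructor
  · intro x hx
    simp only [Set.mem_insert_iff, Set.mem_singleton_iff] at hx
    rcases hx with rfl | rfl
    · exact h
    · exact le_rfl
  · intro v hv
    exact hv (by simp)

lemma isGLB_pair_of_le' {α : Type*} [Preorder α] {a b : α} (h : a ≤ b) :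
    IsGLB {a, b} a := by
  constructor
  · intro x hx
    simp only [Set.mem_insert_iff, Set.mem_singleton_iff] at hx
    rcases hx with rfl | rfl
    · exact le_rfl
    · exact h
  · intro v hv
    exact hv (by simp)

lemma exists_least_ub (hnb : ¬ HasBowtie P) (r : P → ℤ)
    (hr : ∀ x y : P, x < y → r x < r y) (p q : P) (h : ∃ u, p ≤ u ∧ q ≤ u) :
    ∃ u, (p ≤ u ∧ q ≤ u) ∧ ∀ v, p ≤ v → q ≤ v → u ≤ v := by
  have hbdd : ∃ b : ℤ, ∀ z : ℤ, (∃ u, (p ≤ u ∧ q ≤ u) ∧ r u = z) → b ≤ z := by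
    refine ⟨r p, ?_⟩
    rintro z ⟨u, ⟨hpu, _⟩, rfl⟩
    rcases eq_or_lt_of_le hpu with rfl | h'
    · exact le_rfl
    · exact (hr _ _ h').le
  obtain ⟨n, ⟨u, ⟨hpu, hqu⟩, hru⟩, hleast⟩ :=
    Int.exists_least_of_bdd hbdd (by
      obtain ⟨u, h1, h2⟩ := h; exact ⟨r u, u, ⟨h1, h2⟩, rfl⟩)
  refine ⟨u, ⟨hpu, hqu⟩, ?_⟩
  intro v hpv hqv
  by_contra huv
  have hmin : ∀ w, p ≤ w → q ≤ w → ¬ w < u := by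
    intro w hpw hqw hwu
    have h1 := hleast (r w) ⟨w, ⟨hpw, hqw⟩, rfl⟩
    have h2 := hr w u hwu
    omega
  have huv' : u ≠ v := by rintro rfl; exact huv le_rfl
  have hpq : p ≠ q := by
    rintro rfl
    rcases eq_or_lt_of_le hpu with rfl | h'
    · exact huv hpv
    · exact hmin p le_rfl le_rfl h'
  have hpu' : p < u := hpu.lt_of_ne (by rintro rfl; exact huv hpv)
  have hqu' : q < u := hqu.lt_of_ne (by rintro rfl; exact huv hqv)
  have hpv' : p < v := hpv.lt_of_ne (by
    rintro rfl
    rcases eq_or_lt_of_le hpu with h' | h'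
    · exact huv' h'.symm
    · exact hmin p le_rfl hqv h')
  have hqv' : q < v := hqv.lt_of_ne (by
    rintro rfl
    rcases eq_or_lt_of_le hqu with h' | h'
    · exact huv' h'.symm
    · exact hmin q hpv le_rfl h')
  have hx : ∃ x, p ≤ x ∧ q ≤ x ∧ x ≤ u ∧ x ≤ v := by
    by_contra hno
    exact hnb ⟨p, q, u, v, by
      simp [hpq, hpu'.ne, hpv'.ne, hqu'.ne, hqv'.ne, huv'],
      hpu', hpv', hqu', hqv', hno⟩
  obtain ⟨x, hpx, hqx, hxu, hxv⟩ := hx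
  rcases eq_or_lt_of_le hxu with rfl | h'
  · exact huv hxv
  · exact hmin x hpx hqx h'

lemma exists_greatest_lb (hnb : ¬ HasBowtie P) (r : P → ℤ)
    (hr : ∀ x y : P, x < y → r x < r y) (p q : P) (h : ∃ u, u ≤ p ∧ u ≤ q) :
    ∃ u, (u ≤ p ∧ u ≤ q) ∧ ∀ v, v ≤ p → v ≤ q → v ≤ u := by
  have hbdd : ∃ b : ℤ, ∀ z : ℤ, (∃ u, (u ≤ p ∧ u ≤ q) ∧ -(r u) = z) → b ≤ z := by
    refine ⟨-(r p), ?_⟩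
    rintro z ⟨u, ⟨hpu, _⟩, rfl⟩
    rcases eq_or_lt_of_le hpu with rfl | h'
    · exact le_rfl
    · have := hr _ _ h'; omega
  obtain ⟨n, ⟨u, ⟨hpu, hqu⟩, hru⟩, hleast⟩ :=
    Int.exists_least_of_bdd hbdd (by
      obtain ⟨u, h1, h2⟩ := h; exact ⟨-(r u), u, ⟨h1, h2⟩, rfl⟩)
  refine ⟨u, ⟨hpu, hqu⟩, ?_⟩
  intro v hpv hqv
  by_contra huv
  have hmax : ∀ w, w ≤ p → w ≤ q → ¬ u < w := by
    intro w hpw hqw hwu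
    have h1 := hleast (-(r w)) ⟨w, ⟨hpw, hqw⟩, rfl⟩
    have h2 := hr u w hwu
    omega
  have huv' : u ≠ v := by rintro rfl; exact huv le_rfl
  have hpq : p ≠ q := by
    rintro rfl
    rcases eq_or_lt_of_le hpu with h' | h'
    · exact huv (h' ▸ hpv)
    · exact hmax p le_rfl le_rfl h'
  have hpu' : u < p := hpu.lt_of_ne (by rintro rfl; exact huv hpv)
  have hqu' : u < q := hqu.lt_of_ne (by rintro rfl; exact huv hqv)
  have hpv' : v < p := hpv.lt_of_ne (by
    rintro rfl
    rcases eq_or_lt_of_le hpu with h' | h'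
    · exact huv' h'
    · exact hmax _ le_rfl hqv h')
  have hqv' : v < q := hqv.lt_of_ne (by
    rintro rfl
    rcases eq_or_lt_of_le hqu with h' | h'
    · exact huv' h'
    · exact hmax _ hpv le_rfl h')
  have hx : ∃ x, u ≤ x ∧ v ≤ x ∧ x ≤ p ∧ x ≤ q := by
    by_contra hno
    exact hnb ⟨u, v, p, q, by
      simp [hpq, hpu'.ne, hpv'.ne, hqu'.ne, hqv'.ne, huv'],
      hpu', hqu', hpv', hqv', hno⟩
  obtain ⟨x, hpx, hqx, hxu, hxv⟩ := hx
  rcases eq_or_lt_of_le hpx with rfl | h'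
  · exact huv hqx
  · exact hmax x hxu hxv h'

lemma le_coe_top' (y : WithBot (WithTop P)) :
    y ≤ ((⊤ : WithTop P) : WithBot (WithTop P)) := by
  induction y using WithBot.recBotCoe with
  | bot => exact bot_le
  | coe y => exact WithBot.coe_le_coe.2 le_top

end Aux

/-- **Proposition 2.4.** For a weakly graded poset `P`, the poset obtained by adjoining a new
minimum and a new maximum is a lattice iff `P` has no bowtie. -/
theorem weaklyGraded_lattice_iff_no_bowtie {P : Type*} [PartialOrder P]
    (r : P → ℤ) (hr : ∀ x y : P, x < y → r x < r y) :
    (∀ a b : WithBot (WithTop P),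
        (∃ c, IsLUB {a, b} c) ∧ (∃ c, IsGLB {a, b} c)) ↔ ¬ HasBowtie P := by
  constructor
  · intro h hb
    obtain ⟨a, b, c, d, hnd, hac, had, hbc, hbd, hno⟩ := hb
    obtain ⟨s, hs⟩ := (h ((a : WithTop P) : WithBot (WithTop P))
      ((b : WithTop P) : WithBot (WithTop P))).1
    have hsa : ((a : WithTop P) : WithBot (WithTop P)) ≤ s := hs.1 (by simp)
    have hsb : ((b : WithTop P) : WithBot (WithTop P)) ≤ s := hs.1 (by simp)
    have hsc : s ≤ ((c : WithTop P) : WithBot (WithTop P)) := hs.2 (by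
      intro x hx
      simp only [Set.mem_insert_iff, Set.mem_singleton_iff] at hx
      rcases hx with rfl | rfl
      · exact WithBot.coe_le_coe.2 (WithTop.coe_le_coe.2 hac.le)
      · exact WithBot.coe_le_coe.2 (WithTop.coe_le_coe.2 hbc.le))
    have hsd : s ≤ ((d : WithTop P) : WithBot (WithTop P)) := hs.2 (by
      intro x hx
      simp only [Set.mem_insert_iff, Set.mem_singleton_iff] at hx
      rcases hx with rfl | rfl
      · exact WithBot.coe_le_coe.2 (WithTop.coe_le_coe.2 had.le)
      · exact WithBot.coe_le_coe.2 (WithTop.coe_le_coe.2 hbd.le))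
    induction s using WithBot.recBotCoe with
    | bot => simp at hsa
    | coe t =>
      induction t using WithTop.recTopCoe with
      | top =>
        have := WithBot.coe_le_coe.1 hsc
        simp at this
      | coe x =>
        refine hno ⟨x, ?_, ?_, ?_, ?_⟩
        · exact WithTop.coe_le_coe.1 (WithBot.coe_le_coe.1 hsa)
        · exact WithTop.coe_le_coe.1 (WithBot.coe_le_coe.1 hsb)
        · exact WithTop.coe_le_coe.1 (WithBot.coe_le_coe.1 hsc)
        · exact WithTop.coe_le_coe.1 (WithBot.coe_le_coe.1 hsd)
  · intro hnb a b
    constructor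
    · -- LUB
      induction a using WithBot.recBotCoe with
      | bot => exact ⟨b, isLUB_pair_of_le' bot_le⟩
      | coe a =>
        induction b using WithBot.recBotCoe with
        | bot => exact ⟨a, by rw [Set.pair_comm]; exact isLUB_pair_of_le' bot_le⟩
        | coe b =>
          induction a using WithTop.recTopCoe with
          | top =>
            exact ⟨_, by rw [Set.pair_comm]; exact isLUB_pair_of_le' (le_coe_top' _)⟩
          | coe p =>
            induction b using WithTop.recTopCoe with
            | top => exact ⟨_, isLUB_pair_of_le' (le_coe_top' _)⟩
            | coe q =>
              by_cases hub : ∃ u, p ≤ u ∧ q ≤ u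
              · obtain ⟨u, ⟨hpu, hqu⟩, hmin⟩ := exists_least_ub hnb r hr p q hub
                refine ⟨((u : WithTop P) : WithBot (WithTop P)), ?_, ?_⟩
                · intro x hx
                  simp only [Set.mem_insert_iff, Set.mem_singleton_iff] at hx
                  rcases hx with rfl | rfl
                  · exact WithBot.coe_le_coe.2 (WithTop.coe_le_coe.2 hpu)
                  · exact WithBot.coe_le_coe.2 (WithTop.coe_le_coe.2 hqu)
                · intro v hv
                  have h1 : ((p : WithTop P) : WithBot (WithTop P)) ≤ v := hv (by simp)
                  have h2 : ((q : WithTop P) : WithBot (WithTop P)) ≤ v := hv (by simp)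
                  induction v using WithBot.recBotCoe with
                  | bot => simp at h1
                  | coe w =>
                    induction w using WithTop.recTopCoe with
                    | top => exact le_coe_top' _
                    | coe w =>
                      exact WithBot.coe_le_coe.2 (WithTop.coe_le_coe.2 (hmin w
                        (WithTop.coe_le_coe.1 (WithBot.coe_le_coe.1 h1))
                        (WithTop.coe_le_coe.1 (WithBot.coe_le_coe.1 h2))))
              · refine ⟨((⊤ : WithTop P) : WithBot (WithTop P)), ?_, ?_⟩
                · intro x hx; exact le_coe_top' _
                · intro v hv
                  have h1 : ((p : WithTop P) : WithBot (WithTop P)) ≤ v := hv (by simp)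
                  have h2 : ((q : WithTop P) : WithBot (WithTop P)) ≤ v := hv (by simp)
                  induction v using WithBot.recBotCoe with
                  | bot => simp at h1
                  | coe w =>
                    induction w using WithTop.recTopCoe with
                    | top => exact le_rfl
                    | coe w =>
                      exact absurd ⟨w, WithTop.coe_le_coe.1 (WithBot.coe_le_coe.1 h1),
                        WithTop.coe_le_coe.1 (WithBot.coe_le_coe.1 h2)⟩ hub
    · -- GLB
      induction a using WithBot.recBotCoe with
      | bot => exact ⟨⊥, isGLB_pair_of_le' bot_le⟩
      | coe a =>
        induction b using WithBot.recBotCoe with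
        | bot => exact ⟨⊥, by rw [Set.pair_comm]; exact isGLB_pair_of_le' bot_le⟩
        | coe b =>
          induction a using WithTop.recTopCoe with
          | top =>
            exact ⟨_, by rw [Set.pair_comm]; exact isGLB_pair_of_le' (le_coe_top' _)⟩
          | coe p =>
            induction b using WithTop.recTopCoe with
            | top => exact ⟨_, isGLB_pair_of_le' (le_coe_top' _)⟩
            | coe q =>
              by_cases hlb : ∃ u, u ≤ p ∧ u ≤ q
              · obtain ⟨u, ⟨hpu, hqu⟩, hmax⟩ := exists_greatest_lb hnb r hr p q hlb
                refine ⟨((u : WithTop P) : WithBot (WithTop P)), ?_, ?_⟩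
                · intro x hx
                  simp only [Set.mem_insert_iff, Set.mem_singleton_iff] at hx
                  rcases hx with rfl | rfl
                  · exact WithBot.coe_le_coe.2 (WithTop.coe_le_coe.2 hpu)
                  · exact WithBot.coe_le_coe.2 (WithTop.coe_le_coe.2 hqu)
                · intro v hv
                  have h1 : v ≤ ((p : WithTop P) : WithBot (WithTop P)) := hv (by simp)
                  have h2 : v ≤ ((q : WithTop P) : WithBot (WithTop P)) := hv (by simp)
                  induction v using WithBot.recBotCoe with
                  | bot => exact bot_le
                  | coe w =>
                    induction w using WithTop.recTopCoe with
                    | top =>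
                      have := WithBot.coe_le_coe.1 h1
                      simp at this
                    | coe w =>
                      exact WithBot.coe_le_coe.2 (WithTop.coe_le_coe.2 (hmax w
                        (WithTop.coe_le_coe.1 (WithBot.coe_le_coe.1 h1))
                        (WithTop.coe_le_coe.1 (WithBot.coe_le_coe.1 h2))))
              · refine ⟨(⊥ : WithBot (WithTop P)), ?_, ?_⟩
                · intro x hx; exact bot_le
                · intro v hv
                  have h1 : v ≤ ((p : WithTop P) : WithBot (WithTop P)) := hv (by simp)
                  have h2 : v ≤ ((q : WithTop P) : WithBot (WithTop P)) := hv (by simp)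
                  induction v using WithBot.recBotCoe with
                  | bot => exact le_rfl
                  | coe w =>
                    induction w using WithTop.recTopCoe with
                    | top =>
                      have := WithBot.coe_le_coe.1 h1
                      simp at this
                    | coe w =>
                      exact absurd ⟨w, WithTop.coe_le_coe.1 (WithBot.coe_le_coe.1 h1),
                        WithTop.coe_le_coe.1 (WithBot.coe_le_coe.1 h2)⟩ hlb
end

section
/- Let U be a set with a positive partial multiplication satisfying: (U, ≤_L) and (U, ≤_R) are weakly boundedly graded meet-semilattices; for all a, u, v, w ∈ U with a·u, a·v defined and w the ≤_L-join of u and v, the product a·w is defined; symmetrically for ≤_R; and for all a, b, u, v ∈ U with a·u, a·v, b·u, b·v all defined, either a, b have a ≤_R-join or u, v have a ≤_L-join. Then the poset E = (U × {0}) ⊔ (Ū × {1}) defined via ≤_L, ≤_R, and definability of products is a lattice. -/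
/-- A positive partial multiplication on a set `U` (Definition 3.1), encoded as an
`Option`-valued multiplication where `mul u v = some w` means "`u · v` is defined and
equals `w`". -/
structure PositivePartialMul (U : Type*) where
  /-- the partial multiplication -/
  mul : U → U → Option U
  /-- the identity element -/
  e : U
  left_assoc : ∀ u v w uv uvw, mul u v = some uv → mul uv w = some uvw →
    ∃ vw, mul v w = some vw ∧ mul u vw = some uvw
  right_assoc : ∀ u v w vw uvw, mul v w = some vw → mul u vw = some uvw →
    ∃ uv, mul u v = some uv ∧ mul uv w = some uvw
  e_mul : ∀ u, mul e u = some u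
  mul_e : ∀ u, mul u e = some u
  positivity : ∀ u v, mul u v = some e → u = e ∧ v = e
  left_cancel : ∀ u v w x, mul u v = some x → mul u w = some x → v = w
  right_cancel : ∀ u v w x, mul v u = some x → mul w u = some x → v = w

namespace PositivePartialMul

variable {U : Type*} (M : PositivePartialMul U)

/-- The prefix relation: `u ≤_L v` iff `u · w = v` for some `w`. -/
def leL (u v : U) : Prop := ∃ w, M.mul u w = some v

/-- The suffix relation: `u ≤_R v` iff `w · u = v` for some `w`. -/
def leR (u v : U) : Prop := ∃ w, M.mul w u = some v

end PositivePartialMul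

namespace PositivePartialMul

variable {U : Type*} (M : PositivePartialMul U)

/-- The poset `E = (U, 0) ⊔ (Ū, 1)` consisting of a copy of `U` (encoded `Sum.inl`) and an
inverted copy `Ū` of `U` (encoded `Sum.inr`), ordered by: `(u,0) ⪯ (v,0)` iff `u ≤_L v`;
`(u,0) ⪯ (v̄,1)` iff `v · u` is defined; `(ū,1) ⪯ (v̄,1)` iff `v ≤_R u`. -/
def Erel : U ⊕ U → U ⊕ U → Prop
  | .inl u, .inl v => M.leL u v
  | .inl u, .inr v => ∃ w, M.mul v u = some w
  | .inr _, .inl _ => False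
  | .inr u, .inr v => M.leR v u

end PositivePartialMul

/-- `w` is the join of `u` and `v` with respect to the relation `le`. -/
def IsJoinOf {α : Type*} (le : α → α → Prop) (u v w : α) : Prop :=
  le u w ∧ le v w ∧ ∀ x, le u x → le v x → le w x

/-- `w` is the meet of `u` and `v` with respect to the relation `le`. -/
def IsMeetOf {α : Type*} (le : α → α → Prop) (u v w : α) : Prop :=
  le w u ∧ le w v ∧ ∀ x, le x u → le x v → le x w

section Aux

variable {α : Type*}

private lemma exists_rmax (r : α → ℤ) (hf : (Set.range r).Finite)
    (P : α → Prop) (hne : ∃ a, P a) :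
    ∃ a, P a ∧ ∀ b, P b → r b ≤ r a := by
  obtain ⟨a0, ha0⟩ := hne
  have hfin : (r '' {x | P x}).Finite := hf.subset (Set.image_subset_range r _)
  have hne' : (hfin.toFinset).Nonempty := by
    rw [Set.Finite.toFinset_nonempty]
    exact ⟨r a0, a0, ha0, rfl⟩
  have hmem : hfin.toFinset.max' hne' ∈ hfin.toFinset := Finset.max'_mem _ hne'
  rw [Set.Finite.mem_toFinset] at hmem
  obtain ⟨a, hPa, hra⟩ := hmem
  refine ⟨a, hPa, fun b hPb => ?_⟩
  rw [hra]
  exact Finset.le_max' _ _ (by rw [Set.Finite.mem_toFinset]; exact ⟨b, hPb, rfl⟩)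

private lemma exists_rmin (r : α → ℤ) (hf : (Set.range r).Finite)
    (P : α → Prop) (hne : ∃ a, P a) :
    ∃ a, P a ∧ ∀ b, P b → r a ≤ r b := by
  obtain ⟨a, hPa, hmax⟩ := exists_rmax (fun x => -r x) (by
    have : Set.range (fun x => -r x) ⊆ (fun n => -n) '' Set.range r := by
      rintro _ ⟨x, rfl⟩; exact ⟨r x, ⟨x, rfl⟩, rfl⟩
    exact (hf.image _).subset this) P hne
  exact ⟨a, hPa, fun b hPb => by have := hmax b hPb; omega⟩

/-- Bounded joins: in a graded meet-semilattice, two elements with a common upper bound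
have a join. -/
private lemma bounded_join (le : α → α → Prop) (r : α → ℤ)
    (hf : (Set.range r).Finite)
    (hstrict : ∀ u v, le u v → u ≠ v → r u < r v)
    (hmeet : ∀ u v : α, ∃ m, IsMeetOf le u v m)
    (u v c : α) (hu : le u c) (hv : le v c) : ∃ j, IsJoinOf le u v j := by
  obtain ⟨a, ⟨hua, hva⟩, hmin⟩ :=
    exists_rmin r hf (fun x => le u x ∧ le v x) ⟨c, hu, hv⟩
  refine ⟨a, hua, hva, fun x hux hvx => ?_⟩
  obtain ⟨m, hma, hmx, hmg⟩ := hmeet a x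
  have hum : le u m := hmg u hua hux
  have hvm : le v m := hmg v hva hvx
  have heq : m = a := by
    by_contra hne
    exact absurd (hstrict m a hma hne) (not_lt.2 (hmin m ⟨hum, hvm⟩))
  exact heq ▸ hmx

end Aux

/-- **Proposition 3.7.** If `(U, ≤_L)` and `(U, ≤_R)` are weakly boundedly graded
meet-semilattices, products distribute over joins as stated, and for any `a, b, u, v` with
`a·u, a·v, b·u, b·v` all defined either `a, b` have a right join or `u, v` have a left join,
then the poset `E = (U,0) ⊔ (Ū,1)` is a lattice. -/
theorem Erel_lattice {U : Type*} (M : PositivePartialMul U)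
    (hgradeL : ∃ r : U → ℤ, (Set.range r).Finite ∧
      ∀ u v, M.leL u v → u ≠ v → r u < r v)
    (hgradeR : ∃ r : U → ℤ, (Set.range r).Finite ∧
      ∀ u v, M.leR u v → u ≠ v → r u < r v)
    (hmeetL : ∀ u v : U, ∃ m, IsMeetOf M.leL u v m)
    (hmeetR : ∀ u v : U, ∃ m, IsMeetOf M.leR u v m)
    (hjoinL : ∀ a u v w : U, (∃ x, M.mul a u = some x) → (∃ x, M.mul a v = some x) →
      IsJoinOf M.leL u v w → ∃ x, M.mul a w = some x)
    (hjoinR : ∀ a u v w : U, (∃ x, M.mul u a = some x) → (∃ x, M.mul v a = some x) →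
      IsJoinOf M.leR u v w → ∃ x, M.mul w a = some x)
    (hsquare : ∀ a b u v : U, (∃ x, M.mul a u = some x) → (∃ x, M.mul a v = some x) →
      (∃ x, M.mul b u = some x) → (∃ x, M.mul b v = some x) →
      (∃ j, IsJoinOf M.leR a b j) ∨ (∃ j, IsJoinOf M.leL u v j)) :
    ∀ x y : U ⊕ U, (∃ z, IsJoinOf M.Erel x y z) ∧ (∃ z, IsMeetOf M.Erel x y z) := by
  obtain ⟨rL, hrLf, hrL⟩ := hgradeL
  obtain ⟨rR, hrRf, hrR⟩ := hgradeR
  have comm : ∀ x y : U ⊕ U,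
      ((∃ z, IsJoinOf M.Erel x y z) ∧ (∃ z, IsMeetOf M.Erel x y z)) →
      ((∃ z, IsJoinOf M.Erel y x z) ∧ (∃ z, IsMeetOf M.Erel y x z)) := by
    rintro x y ⟨⟨j, hj1, hj2, hj3⟩, ⟨m, hm1, hm2, hm3⟩⟩
    exact ⟨⟨j, hj2, hj1, fun z h1 h2 => hj3 z h2 h1⟩,
           ⟨m, hm2, hm1, fun z h1 h2 => hm3 z h2 h1⟩⟩
  -- Case: inl u, inl v
  have case_ll : ∀ u v : U,
      (∃ z, IsJoinOf M.Erel (.inl u) (.inl v) z) ∧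
      (∃ z, IsMeetOf M.Erel (.inl u) (.inl v) z) := by
    intro u v
    constructor
    · by_cases hub : ∃ c, M.leL u c ∧ M.leL v c
      · obtain ⟨c, huc, hvc⟩ := hub
        obtain ⟨j, hj1, hj2, hj3⟩ := bounded_join M.leL rL hrLf hrL hmeetL u v c huc hvc
        refine ⟨.inl j, hj1, hj2, ?_⟩
        rintro (w | w) h1 h2
        · exact hj3 w h1 h2
        · exact hjoinL w u v j h1 h2 ⟨hj1, hj2, hj3⟩
      · obtain ⟨a, ⟨hau, hav⟩, hamax⟩ := exists_rmax rR hrRf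
          (fun w => (∃ x, M.mul w u = some x) ∧ (∃ x, M.mul w v = some x))
          ⟨M.e, ⟨u, M.e_mul u⟩, ⟨v, M.e_mul v⟩⟩
        have hCmax : ∀ b, (∃ x, M.mul b u = some x) → (∃ x, M.mul b v = some x) →
            M.leR b a := by
          intro b hbu hbv
          rcases hsquare a b u v hau hav hbu hbv with ⟨j, hj⟩ | ⟨j, hj⟩
          · obtain ⟨hj1, hj2, hj3⟩ := hj
            have hju := hjoinR u a b j hau hbu ⟨hj1, hj2, hj3⟩
            have hjv := hjoinR v a b j hav hbv ⟨hj1, hj2, hj3⟩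
            have heq : a = j := by
              by_contra hne
              exact absurd (hrR a j hj1 hne) (not_lt.2 (hamax j ⟨hju, hjv⟩))
            exact heq ▸ hj2
          · exact absurd ⟨j, hj.1, hj.2.1⟩ hub
        refine ⟨.inr a, hau, hav, ?_⟩
        rintro (w | w) h1 h2
        · exact absurd ⟨w, h1, h2⟩ hub
        · exact hCmax w h1 h2
    · obtain ⟨m, hm1, hm2, hm3⟩ := hmeetL u v
      refine ⟨.inl m, hm1, hm2, ?_⟩
      rintro (b | b) h1 h2
      · exact hm3 b h1 h2
      · exact h1.elim
  -- Case: inl u, inr v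
  have case_lr : ∀ u v : U,
      (∃ z, IsJoinOf M.Erel (.inl u) (.inr v) z) ∧
      (∃ z, IsMeetOf M.Erel (.inl u) (.inr v) z) := by
    intro u v
    constructor
    · -- join: maximal (w.r.t. rR) element of D = {w | w ≤_R v ∧ w·u defined}
      obtain ⟨a, ⟨hav, hau⟩, hamax⟩ := exists_rmax rR hrRf
        (fun w => M.leR w v ∧ ∃ x, M.mul w u = some x)
        ⟨M.e, ⟨v, M.mul_e v⟩, ⟨u, M.e_mul u⟩⟩
      have hDmax : ∀ b, M.leR b v → (∃ x, M.mul b u = some x) → M.leR b a := by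
        intro b hbv hbu
        obtain ⟨j, hj1, hj2, hj3⟩ :=
          bounded_join M.leR rR hrRf hrR hmeetR a b v hav hbv
        have hjv : M.leR j v := hj3 v hav hbv
        have hju := hjoinR u a b j hau hbu ⟨hj1, hj2, hj3⟩
        have heq : a = j := by
          by_contra hne
          exact absurd (hrR a j hj1 hne) (not_lt.2 (hamax j ⟨hjv, hju⟩))
        exact heq ▸ hj2
      refine ⟨.inr a, hau, hav, ?_⟩
      rintro (w | w) h1 h2
      · exact h2.elim
      · exact hDmax w h2 h1
    · -- meet: maximal (w.r.t. rL) element of B = {b | b ≤_L u ∧ v·b defined}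
      obtain ⟨a, ⟨hau, hav⟩, hamax⟩ := exists_rmax rL hrLf
        (fun b => M.leL b u ∧ ∃ x, M.mul v b = some x)
        ⟨M.e, ⟨u, M.e_mul u⟩, ⟨v, M.mul_e v⟩⟩
      have hBmax : ∀ b, M.leL b u → (∃ x, M.mul v b = some x) → M.leL b a := by
        intro b hbu hbv
        obtain ⟨j, hj1, hj2, hj3⟩ :=
          bounded_join M.leL rL hrLf hrL hmeetL a b u hau hbu
        have hju : M.leL j u := hj3 u hau hbu
        have hjv := hjoinL v a b j hav hbv ⟨hj1, hj2, hj3⟩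
        have heq : a = j := by
          by_contra hne
          exact absurd (hrL a j hj1 hne) (not_lt.2 (hamax j ⟨hju, hjv⟩))
        exact heq ▸ hj2
      refine ⟨.inl a, hau, hav, ?_⟩
      rintro (b | b) h1 h2
      · exact hBmax b h1 h2
      · exact h1.elim
  -- Case: inr u, inr v
  have case_rr : ∀ u v : U,
      (∃ z, IsJoinOf M.Erel (.inr u) (.inr v) z) ∧
      (∃ z, IsMeetOf M.Erel (.inr u) (.inr v) z) := by
    intro u v
    constructor
    · obtain ⟨m, hm1, hm2, hm3⟩ := hmeetR u v
      refine ⟨.inr m, hm1, hm2, ?_⟩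
      rintro (w | w) h1 h2
      · exact h1.elim
      · exact hm3 w h1 h2
    · by_cases hub : ∃ c, M.leR u c ∧ M.leR v c
      · obtain ⟨c, huc, hvc⟩ := hub
        obtain ⟨j, hj1, hj2, hj3⟩ := bounded_join M.leR rR hrRf hrR hmeetR u v c huc hvc
        refine ⟨.inr j, hj1, hj2, ?_⟩
        rintro (b | b) h1 h2
        · exact hjoinR b u v j h1 h2 ⟨hj1, hj2, hj3⟩
        · exact hj3 b h1 h2
      · obtain ⟨a, ⟨hau, hav⟩, hamax⟩ := exists_rmax rL hrLf
          (fun b => (∃ x, M.mul u b = some x) ∧ (∃ x, M.mul v b = some x))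
          ⟨M.e, ⟨u, M.mul_e u⟩, ⟨v, M.mul_e v⟩⟩
        have hAmax : ∀ b, (∃ x, M.mul u b = some x) → (∃ x, M.mul v b = some x) →
            M.leL b a := by
          intro b hbu hbv
          rcases hsquare u v a b hau hbu hav hbv with ⟨j, hj⟩ | ⟨j, hj⟩
          · exact absurd ⟨j, hj.1, hj.2.1⟩ hub
          · obtain ⟨hj1, hj2, hj3⟩ := hj
            have hju := hjoinL u a b j hau hbu ⟨hj1, hj2, hj3⟩
            have hjv := hjoinL v a b j hav hbv ⟨hj1, hj2, hj3⟩
            have heq : a = j := by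
              by_contra hne
              exact absurd (hrL a j hj1 hne) (not_lt.2 (hamax j ⟨hju, hjv⟩))
            exact heq ▸ hj2
        refine ⟨.inl a, hau, hav, ?_⟩
        rintro (b | b) h1 h2
        · exact hAmax b h1 h2
        · exact absurd ⟨b, h1, h2⟩ hub
  intro x y
  match x, y with
  | .inl u, .inl v => exact case_ll u v
  | .inl u, .inr v => exact case_lr u v
  | .inr u, .inl v => exact comm _ _ (case_lr v u)
  | .inr u, .inr v => exact case_rr u v
end

section
/- In any Coxeter system (W, S), if a word w in the generators S represents the identity element of W, then each letter appearing in w appears at least twice. -/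
/-!
Tits' geometric representation: on `V = B →₀ ℝ` let `s_k` act by the reflection
`v ↦ v - 2 B(e_k, v) e_k`, where `B(e_k, e_l) = -cos (π / m_kl)`. On the plane spanned by `e_k`
and `e_l` the product `s_k s_l` rotates the vectors `sin φ • e_k + sin (φ - θ) • e_l`,
`θ = π / m_kl`, by `2θ`, so `∑_{t < m_kl} (s_k s_l)^t` kills that plane, which contains the image
of `s_k s_l - 1`; hence the Coxeter relations hold. A reflection `s_k` with `k ≠ i` does not change
the `i`-th coordinate, whereas `s_i e_i = -e_i`. So `s_i` is not a product of the other generators,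
which is what a word for `1` containing `i` exactly once would give.
-/

open Real Finset Finsupp

theorem sum_range_sin_add_two_mul_eq_zero {θ : ℝ} {m : ℕ} (hθ : sin θ ≠ 0) (hm : m * θ = π)
    (φ : ℝ) : ∑ t ∈ range m, sin (φ + 2 * t * θ) = 0 := by
  set g : ℕ → ℝ := fun t ↦ cos (φ + 2 * t * θ - θ)
  have htelescope (t : ℕ) : 2 * sin (φ + 2 * t * θ) * sin θ = g t - g (t + 1) := by
    rw [two_mul_sin_mul_sin]
    push_cast [g]
    ring_nf
  have hperiod : g m = g 0 := by
    simp only [g]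
    rw [show φ + 2 * m * θ - θ = φ + 2 * 0 * θ - θ + 2 * (m * θ) by ring, hm]
    simp [cos_add_two_pi]
  have h2 : (∑ t ∈ range m, sin (φ + 2 * t * θ)) * (2 * sin θ) = 0 := by
    simp_rw [Finset.sum_mul, ← mul_assoc, mul_comm _ (2 : ℝ), htelescope]
    rw [sum_range_sub', hperiod, sub_self]
  simpa [hθ] using h2

namespace CoxeterMatrix

variable {B : Type*} (M : CoxeterMatrix B)

/-- `v ↦ 2 B(e_k, v)`. For `m_kl = 0` Lean's `π / 0 = 0` gives `B(e_k, e_l) = -1`, the usual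
value for `m_kl = ∞`. -/
noncomputable def cosineForm (k : B) : Module.Dual ℝ (B →₀ ℝ) :=
  linearCombination ℝ fun l ↦ -2 * cos (π / M k l)

lemma cosineForm_single (k l : B) : M.cosineForm k (single l 1) = -2 * cos (π / M k l) := by
  simp [cosineForm]

lemma cosineForm_single_self (k : B) : M.cosineForm k (single k 1) = 2 := by
  simp [cosineForm_single]

noncomputable def geometricReflection (k : B) : Module.End ℝ (B →₀ ℝ) :=
  Module.preReflection (single k 1) (M.cosineForm k)

lemma geometricReflection_apply (k : B) (v : B →₀ ℝ) :
    M.geometricReflection k v = v - M.cosineForm k v • single k 1 :=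
  Module.preReflection_apply _ _ _

lemma geometricReflection_single_self (k : B) :
    M.geometricReflection k (single k 1) = -single k 1 :=
  Module.preReflection_apply_self (M.cosineForm_single_self k)

lemma geometricReflection_mul_self (k : B) :
    M.geometricReflection k * M.geometricReflection k = 1 :=
  LinearMap.ext fun v ↦ Module.involutive_preReflection (M.cosineForm_single_self k) v

lemma geometricReflection_apply_of_ne {k i : B} (h : k ≠ i) (v : B →₀ ℝ) :
    M.geometricReflection k v i = v i := by
  simp [geometricReflection_apply, h]

lemma geometricReflection_sin_smul_add (k l : B) (a : ℝ) :
    M.geometricReflection l (sin a • single k 1 + sin (a - π / M k l) • single l 1) =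
      sin a • single k 1 + sin (a + π / M k l) • single l 1 := by
  rw [geometricReflection_apply, map_add, map_smul, map_smul, cosineForm_single,
    cosineForm_single_self, M.symmetric l k, sin_add, sin_sub]
  module

lemma geometricReflection_mul_sin_smul_add (k l : B) (a : ℝ) :
    (M.geometricReflection k * M.geometricReflection l)
        (sin a • single k 1 + sin (a - π / M k l) • single l 1) =
      sin (a + 2 * (π / M k l)) • single k 1 +
        sin (a + 2 * (π / M k l) - π / M k l) • single l 1 := by
  have h := M.geometricReflection_sin_smul_add l k (a + π / M k l)
  rw [M.symmetric l k, add_sub_cancel_right, add_comm (sin _ • _)] at h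
  rw [Module.End.mul_apply, geometricReflection_sin_smul_add, h, add_comm]
  ring_nf

lemma geometricReflection_mul_pow_sin_smul_add (k l : B) (φ : ℝ) (t : ℕ) :
    ((M.geometricReflection k * M.geometricReflection l) ^ t)
        (sin φ • single k 1 + sin (φ - π / M k l) • single l 1) =
      sin (φ + 2 * t * (π / M k l)) • single k 1 +
        sin (φ + 2 * t * (π / M k l) - π / M k l) • single l 1 := by
  induction t with
  | zero => simp
  | succ t ih =>
    rw [pow_succ', Module.End.mul_apply, ih, geometricReflection_mul_sin_smul_add]
    push_cast
    ring_nf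

lemma sum_pow_geometricReflection_mul_single_eq_zero {k l : B} (hkl : k ≠ l) (hm : M k l ≠ 0) :
    (∑ t ∈ range (M k l), (M.geometricReflection k * M.geometricReflection l) ^ t) (single k 1)
      = 0 ∧
    (∑ t ∈ range (M k l), (M.geometricReflection k * M.geometricReflection l) ^ t) (single l 1)
      = 0 := by
  have hm2 : (2 : ℝ) ≤ M k l := by
    have := M.off_diagonal k l hkl
    exact_mod_cast (show 2 ≤ M k l by omega)
  have hsin : sin (π / M k l) ≠ 0 := by
    refine (sin_pos_of_pos_of_lt_pi (by positivity) ?_).ne'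
    rw [div_lt_iff₀ (by linarith)]
    nlinarith [pi_pos]
  have hmθ : (M k l : ℝ) * (π / M k l) = π := mul_div_cancel₀ _ (by positivity)
  have hsum (φ : ℝ) :
      (∑ t ∈ range (M k l), (M.geometricReflection k * M.geometricReflection l) ^ t)
        (sin φ • single k 1 + sin (φ - π / M k l) • single l 1) = 0 := by
    simp_rw [LinearMap.sum_apply, geometricReflection_mul_pow_sin_smul_add, sum_add_distrib,
      ← sum_smul, add_sub_right_comm φ, sum_range_sin_add_two_mul_eq_zero hsin hmθ, zero_smul,
      add_zero]
  have hk := hsum (π / M k l)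
  have hl := hsum 0
  rw [sub_self, sin_zero, zero_smul, add_zero, map_smul, smul_eq_zero] at hk
  rw [sin_zero, zero_smul, zero_add, zero_sub, sin_neg, neg_smul, map_neg, neg_eq_zero, map_smul,
    smul_eq_zero] at hl
  exact ⟨hk.resolve_left hsin, hl.resolve_left hsin⟩

lemma geometricReflection_mul_pow {k l : B} (hkl : k ≠ l) (hm : M k l ≠ 0) :
    (M.geometricReflection k * M.geometricReflection l) ^ M k l = 1 := by
  obtain ⟨hk, hl⟩ := M.sum_pow_geometricReflection_mul_single_eq_zero hkl hm
  have hρ (v : B →₀ ℝ) : (M.geometricReflection k * M.geometricReflection l - 1) v =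
      -M.cosineForm k (M.geometricReflection l v) • single k 1 - M.cosineForm l v • single l 1 := by
    simp only [LinearMap.sub_apply, Module.End.mul_apply, Module.End.one_apply,
      geometricReflection_apply]
    module
  rw [← sub_eq_zero, ← geom_sum_mul (M.geometricReflection k * M.geometricReflection l) (M k l)]
  refine LinearMap.ext fun v ↦ ?_
  rw [Module.End.mul_apply, hρ, map_sub, map_smul, map_smul, hk, hl]
  simp

theorem isLiftable_geometricReflection : M.IsLiftable M.geometricReflection := by
  intro k l
  rcases eq_or_ne k l with rfl | hkl
  · rw [M.diagonal, pow_one, geometricReflection_mul_self]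
  rcases eq_or_ne (M k l) 0 with hm | hm
  · rw [hm, pow_zero]
  · exact M.geometricReflection_mul_pow hkl hm

end CoxeterMatrix

namespace CoxeterSystem

variable {B W : Type*} [Group W] {M : CoxeterMatrix B} (cs : CoxeterSystem M W)

noncomputable def geometricRepresentation : W →* Module.End ℝ (B →₀ ℝ) :=
  cs.lift ⟨M.geometricReflection, M.isLiftable_geometricReflection⟩

lemma geometricRepresentation_simple (i : B) :
    cs.geometricRepresentation (cs.simple i) = M.geometricReflection i :=
  cs.lift_apply_simple _ i

lemma geometricRepresentation_wordProd_apply_of_notMem {ω : List B} {i : B} (hi : i ∉ ω)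
    (v : B →₀ ℝ) : cs.geometricRepresentation (cs.wordProd ω) v i = v i := by
  induction ω generalizing v with
  | nil => simp
  | cons k ω ih =>
    rw [List.mem_cons, not_or] at hi
    rw [wordProd_cons, map_mul, Module.End.mul_apply, geometricRepresentation_simple,
      M.geometricReflection_apply_of_ne (Ne.symm hi.1), ih hi.2]

theorem simple_ne_wordProd_of_notMem {ω : List B} {i : B} (hi : i ∉ ω) :
    cs.simple i ≠ cs.wordProd ω := by
  intro h
  have := cs.geometricRepresentation_wordProd_apply_of_notMem hi (single i 1)
  rw [← h, geometricRepresentation_simple, M.geometricReflection_single_self] at this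
  norm_num at this

end CoxeterSystem

/-- **Lemma 5.1.** In any Coxeter system, if a word in the generators represents the identity
element, then each letter appearing in it appears at least twice. -/
theorem letter_count_of_wordProd_eq_one {B W : Type*} [DecidableEq B] [Group W]
    {M : CoxeterMatrix B} (cs : CoxeterSystem M W)
    (w : List B) (hw : cs.wordProd w = 1) :
    ∀ i ∈ w, 2 ≤ w.count i := by
  intro i hi
  by_contra! hlt
  obtain ⟨u, v, rfl⟩ := List.append_of_mem hi
  rw [List.count_append, List.count_cons_self] at hlt
  have hu : i ∉ u := List.count_eq_zero.mp (by omega)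
  have hv : i ∉ v := List.count_eq_zero.mp (by omega)
  rw [cs.wordProd_append, cs.wordProd_cons] at hw
  refine cs.simple_ne_wordProd_of_notMem (i := i) (ω := u.reverse ++ v.reverse)
    (by simp [hu, hv]) ?_
  calc cs.simple i
      = (cs.wordProd u)⁻¹ * (cs.wordProd u * (cs.simple i * cs.wordProd v)) *
          (cs.wordProd v)⁻¹ := by group
    _ = cs.wordProd (u.reverse ++ v.reverse) := by
        rw [hw, mul_one, cs.wordProd_append, cs.wordProd_reverse, cs.wordProd_reverse]
end

section
/- In any Coxeter system (W, S), let s ∈ S and let w be a reduced word in the generators S \ {s} representing an element that commutes with s in W. Then every letter of w commutes with s (i.e., has m(s,t) = 2 for every letter t of w). -/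
/-!
Two representations of `W` do the work. Tits' permutation representation on `W × ℤˣ` gives the
strong exchange property: every left inversion of `π ω` occurs in the left inversion sequence of
`ω`, whose entries are products of letters of `ω`. In the geometric representation on `B →₀ ℂ`
every simple reflection other than `s` fixes the `s`-coordinate, so a product of such reflections
can be neither `s` nor `s t s`: the latter changes the `s`-coordinate of `α_s` by
`-4 cos² (π / m(s, t))`, which vanishes only for `m(s, t) = 2`.

Write `w = t w'`. Since `s` is not a left inversion of `w`, the word `s t w'` is reduced, so `s t s`
is a left inversion of `s w = w s`. By strong exchange it occurs in the left inversion sequence of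
`t w' s`, hence in that of `t w'` (the last entry is `w s w⁻¹ = s`). So `m(s, t) = 2`, `s` commutes
with `w'`, and induction on `w` concludes.
-/

open Finset in
theorem Module.End.mem_ker_sum_pow_of_apply_eq_smul {K V : Type*} [CommRing K] [IsDomain K]
    [AddCommGroup V] [Module K V] {T : Module.End K V} {v : V} {ζ : K} {m : ℕ}
    (hζ : IsPrimitiveRoot ζ m) (hm : 1 < m) (hv : T v = ζ • v) :
    v ∈ LinearMap.ker (∑ r ∈ range m, T ^ r) := by
  have hpow : ∀ r : ℕ, (T ^ r) v = ζ ^ r • v := fun r ↦ by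
    induction r with
    | zero => simp
    | succ r ih => rw [pow_succ', Module.End.mul_apply, ih, map_smul, hv, smul_smul, ← pow_succ]
  simp [hpow, ← sum_smul, hζ.geom_sum_eq_zero hm]

open Finset in
theorem Module.End.pow_eq_one_of_forall_sub_mem_ker {R V : Type*} [Ring R]
    [AddCommGroup V] [Module R V] {T : Module.End R V} {m : ℕ}
    (h : ∀ v, T v - v ∈ LinearMap.ker (∑ r ∈ range m, T ^ r)) : T ^ m = 1 := by
  rw [← sub_eq_zero, ← geom_sum_mul]
  ext1 v
  simpa using h v

namespace CoxeterMatrix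

variable {B : Type*} (M : CoxeterMatrix B)

/-- `⟨α_i, α_j⟩ = -cos (π / M i j)` for the simple roots `α_i = Finsupp.single i 1`; for
`M i j = 0` (that is, `m = ∞`) it is `-1` since `π / 0 = 0`. -/
noncomputable def geomForm (i j : B) : ℂ := -(Real.cos (Real.pi / M i j) : ℂ)

theorem geomForm_self (i : B) : M.geomForm i i = 1 := by
  simp [geomForm]

theorem geomForm_comm (i j : B) : M.geomForm i j = M.geomForm j i := by
  rw [geomForm, M.symmetric, geomForm]

theorem eq_two_of_geomForm_eq_zero {i j : B} (hij : i ≠ j) (h : M.geomForm i j = 0) :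
    M i j = 2 := by
  have hcos : Real.cos (Real.pi / M i j) = 0 := by
    rwa [geomForm, neg_eq_zero, Complex.ofReal_eq_zero] at h
  have h1 : M i j ≠ 1 := M.off_diagonal i j hij
  by_contra h2
  rcases Nat.eq_zero_or_pos (M i j) with h0 | hpos
  · simp [h0] at hcos
  · have hlt : Real.pi / M i j < Real.pi / 2 :=
      div_lt_div_of_pos_left Real.pi_pos two_pos (by exact_mod_cast (by omega : 2 < M i j))
    have := Real.cos_pos_of_mem_Ioo ⟨by linarith [div_pos Real.pi_pos (Nat.cast_pos.2 hpos),
      Real.pi_pos], hlt⟩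
    linarith

noncomputable def geomCoroot (i : B) : (B →₀ ℂ) →ₗ[ℂ] ℂ :=
  Finsupp.linearCombination ℂ (M.geomForm i)

theorem geomCoroot_single (i j : B) (c : ℂ) :
    M.geomCoroot i (Finsupp.single j c) = c * M.geomForm i j := by
  simp [geomCoroot]

noncomputable def geomReflection (i : B) : Module.End ℂ (B →₀ ℂ) :=
  LinearMap.id - ((2 : ℂ) • M.geomCoroot i).smulRight (Finsupp.single i 1)

theorem geomReflection_apply (i : B) (v : B →₀ ℂ) :
    M.geomReflection i v = v - (2 * M.geomCoroot i v) • Finsupp.single i 1 := by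
  simp [geomReflection]

theorem geomReflection_single_self (i : B) :
    M.geomReflection i (Finsupp.single i 1) = -Finsupp.single i 1 := by
  rw [geomReflection_apply, geomCoroot_single, geomForm_self]
  module

theorem geomReflection_apply_apply_of_ne {i x : B} (hx : x ≠ i) (v : B →₀ ℂ) :
    M.geomReflection i v x = v x := by
  simp [geomReflection_apply, Ne.symm hx]

theorem geomReflection_mul_self (i : B) : M.geomReflection i * M.geomReflection i = 1 := by
  refine LinearMap.ext fun v ↦ ?_
  rw [Module.End.mul_apply, Module.End.one_apply, geomReflection_apply _ _ (M.geomReflection i v),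
    geomReflection_apply, map_sub, map_smul, geomCoroot_single, geomForm_self]
  module

theorem geomReflection_mul_apply_single_add_smul_single {i j : B} {z : ℂ} (hz : z ≠ 0)
    (hform : M.geomForm i j = -(z + z⁻¹) / 2) :
    (M.geomReflection i * M.geomReflection j) (Finsupp.single i 1 + z • Finsupp.single j 1) =
      (z ^ 2)⁻¹ • (Finsupp.single i 1 + z • Finsupp.single j 1) := by
  have hform' : M.geomForm j i = -(z + z⁻¹) / 2 := by rw [geomForm_comm, hform]
  simp only [Module.End.mul_apply, geomReflection_apply, map_add, map_sub, map_smul,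
    geomCoroot_single, geomForm_self, hform, hform']
  match_scalars <;> field_simp <;> ring

theorem geomReflection_mul_pow_eq_one {i j : B} {z : ℂ} {m : ℕ} (hm : 1 < m)
    (hz : IsPrimitiveRoot (z ^ 2) m) (hform : M.geomForm i j = -(z + z⁻¹) / 2) :
    (M.geomReflection i * M.geomReflection j) ^ m = 1 := by
  have hz0 : z ≠ 0 := fun h ↦ hz.ne_zero (by omega) (by simp [h])
  have hzz : z - z⁻¹ ≠ 0 := by
    intro h
    refine hz.ne_one hm ?_
    field_simp at h
    linear_combination h
  -- `T = σ_i σ_j` satisfies `T v - v ∈ span {α_i, α_j}`, a plane spanned by eigenvectors of `T`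
  -- with eigenvalues `z^∓2`, primitive `m`-th roots of unity; so `∑ r < m, T ^ r` kills `T v - v`.
  set K := LinearMap.ker (∑ r ∈ Finset.range m, (M.geomReflection i * M.geomReflection j) ^ r)
  have ha : Finsupp.single i 1 + z • Finsupp.single j 1 ∈ K :=
    Module.End.mem_ker_sum_pow_of_apply_eq_smul hz.inv hm
      (M.geomReflection_mul_apply_single_add_smul_single hz0 hform)
  have hb : Finsupp.single i 1 + z⁻¹ • Finsupp.single j 1 ∈ K := by
    have := M.geomReflection_mul_apply_single_add_smul_single (inv_ne_zero hz0)
      (by rw [hform, inv_inv, add_comm])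
    rw [inv_pow, inv_inv] at this
    exact Module.End.mem_ker_sum_pow_of_apply_eq_smul hz hm this
  have hj : Finsupp.single j (1 : ℂ) ∈ K := by
    convert K.smul_mem (z - z⁻¹)⁻¹ (K.sub_mem ha hb) using 1
    rw [add_sub_add_left_eq_sub, ← sub_smul, smul_smul, inv_mul_cancel₀ hzz, one_smul]
  have hi : Finsupp.single i (1 : ℂ) ∈ K := by
    convert K.sub_mem ha (K.smul_mem z hj) using 1
    simp
  refine Module.End.pow_eq_one_of_forall_sub_mem_ker fun v ↦ ?_
  have hTv : (M.geomReflection i * M.geomReflection j) v - v =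
      -(2 * M.geomCoroot i (M.geomReflection j v)) • Finsupp.single i 1 -
        (2 * M.geomCoroot j v) • Finsupp.single j 1 := by
    rw [Module.End.mul_apply, geomReflection_apply _ i, geomReflection_apply _ j]
    module
  rw [hTv]
  exact K.sub_mem (K.smul_mem _ hi) (K.smul_mem _ hj)

theorem isLiftable_geomReflection : M.IsLiftable M.geomReflection := by
  intro i j
  rcases eq_or_ne i j with rfl | hij
  · simp [geomReflection_mul_self]
  rcases Nat.lt_or_ge (M i j) 2 with hlt | hm
  · have : M i j = 0 := by have := M.off_diagonal i j hij; omega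
    simp [this]
  refine M.geomReflection_mul_pow_eq_one (z := Complex.exp (Real.pi * Complex.I / M i j)) hm ?_ ?_
  · rw [← Complex.exp_nat_mul, show ((2 : ℕ) : ℂ) * (Real.pi * Complex.I / M i j) =
      2 * Real.pi * Complex.I / M i j by push_cast; ring]
    exact Complex.isPrimitiveRoot_exp _ (by omega)
  · rw [geomForm, Complex.ofReal_cos, Complex.cos, ← Complex.exp_neg]
    push_cast
    ring_nf

end CoxeterMatrix

namespace CoxeterSystem

open List

variable {B W : Type*} [Group W] {M : CoxeterMatrix B} (cs : CoxeterSystem M W)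

theorem simple_mul_mul_simple_eq_simple_iff (i : B) (u : W) :
    cs.simple i * u * cs.simple i = cs.simple i ↔ u = cs.simple i := by
  rw [← (MulAut.conj (cs.simple i)).injective.eq_iff]
  simp [cs.inv_simple, mul_assoc, cs.simple_mul_simple_self]

section TitsCocycle

open scoped Classical

theorem titsPerm_involutive (i : B) : Function.Involutive fun x : W × ℤˣ ↦
    (cs.simple i * x.1 * cs.simple i, if x.1 = cs.simple i then -x.2 else x.2) := by
  rintro ⟨t, ε⟩
  simp only [simple_mul_mul_simple_eq_simple_iff, Prod.mk.injEq]
  refine ⟨by simp [mul_assoc, cs.simple_mul_simple_cancel_left], by split_ifs <;> simp⟩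

noncomputable def titsPerm (i : B) : Equiv.Perm (W × ℤˣ) := (cs.titsPerm_involutive i).toPerm

theorem titsPerm_apply (i : B) (t : W) (ε : ℤˣ) :
    cs.titsPerm i (t, ε) =
      (cs.simple i * t * cs.simple i, if t = cs.simple i then -ε else ε) := rfl

theorem prod_map_titsPerm_apply (ω : List B) (t : W) (ε : ℤˣ) :
    (ω.map cs.titsPerm).prod (t, ε) =
      (cs.wordProd ω * t * (cs.wordProd ω)⁻¹,
        (-1) ^ (cs.leftInvSeq ω).count (cs.wordProd ω * t * (cs.wordProd ω)⁻¹) * ε) := by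
  induction ω with
  | nil => simp
  | cons i ω ih =>
    rw [map_cons, prod_cons, Equiv.Perm.mul_apply, ih, titsPerm_apply]
    set u := cs.wordProd ω * t * (cs.wordProd ω)⁻¹
    have hu : cs.wordProd (i :: ω) * t * (cs.wordProd (i :: ω))⁻¹ =
        cs.simple i * u * cs.simple i := by
      simp [u, wordProd_cons, mul_assoc, cs.inv_simple]
    have hcount : (cs.leftInvSeq (i :: ω)).count (cs.simple i * u * cs.simple i) =
        (cs.leftInvSeq ω).count u + if u = cs.simple i then 1 else 0 := by
      have := count_map_of_injective (cs.leftInvSeq ω) _ (MulAut.conj (cs.simple i)).injective u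
      simp only [MulAut.conj_apply, cs.inv_simple] at this
      simp only [leftInvSeq, count_cons, this, beq_iff_eq, eq_comm (a := cs.simple i),
        simple_mul_mul_simple_eq_simple_iff]
    rw [hu, hcount]
    split_ifs <;> simp [pow_succ]

theorem count_leftInvSeq_alternatingWord_even (i j : B) (t : W) :
    Even ((cs.leftInvSeq (alternatingWord i j (2 * M i j))).count t) := by
  have hlis : cs.leftInvSeq (alternatingWord i j (2 * M i j)) =
      (range (M i j + M i j)).map fun k ↦ cs.simple i * (cs.simple j * cs.simple i) ^ k := by
    refine ext_getElem (by simp [two_mul]) fun k hk _ ↦ ?_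
    simp only [getElem_map, getElem_range]
    rw [getElem_leftInvSeq_alternatingWord cs i j _ k (by simpa using hk),
      prod_alternatingWord_eq_mul_pow]
    simp [Nat.mul_add_div]
  have hperiod : ∀ k, cs.simple i * (cs.simple j * cs.simple i) ^ (M i j + k) =
      cs.simple i * (cs.simple j * cs.simple i) ^ k := by
    simp [pow_add]
  rw [hlis, range_add, map_append, map_map, Function.comp_def]
  simp only [hperiod, count_append]
  exact ⟨_, rfl⟩

theorem prod_map_titsPerm_alternatingWord (i j : B) (n : ℕ) :
    ((alternatingWord i j (2 * n)).map cs.titsPerm).prod = (cs.titsPerm i * cs.titsPerm j) ^ n := by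
  induction n with
  | zero => simp [alternatingWord]
  | succ n ih =>
    rw [Nat.mul_succ, alternatingWord_succ', alternatingWord_succ']
    simp [ih, pow_succ', mul_assoc]

theorem isLiftable_titsPerm : M.IsLiftable cs.titsPerm := by
  intro i j
  rw [← prod_map_titsPerm_alternatingWord]
  ext ⟨t, ε⟩ <;>
  · have h1 : cs.wordProd (alternatingWord i j (2 * M i j)) = 1 := by
      simp [prod_alternatingWord_eq_mul_pow]
    simp [prod_map_titsPerm_apply, h1,
      (cs.count_leftInvSeq_alternatingWord_even i j t).neg_one_pow]

noncomputable def titsRep : W →* Equiv.Perm (W × ℤˣ) :=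
  cs.lift ⟨cs.titsPerm, cs.isLiftable_titsPerm⟩

theorem titsRep_wordProd_apply (ω : List B) (t : W) (ε : ℤˣ) :
    cs.titsRep (cs.wordProd ω) (t, ε) =
      (cs.wordProd ω * t * (cs.wordProd ω)⁻¹,
        (-1) ^ (cs.leftInvSeq ω).count (cs.wordProd ω * t * (cs.wordProd ω)⁻¹) * ε) := by
  rw [← prod_map_titsPerm_apply, wordProd, map_list_prod, map_map]
  congr 3
  ext1 i
  exact cs.lift_apply_simple cs.isLiftable_titsPerm i

/-- The sign `η(w, t)`, which is `-1` exactly when the reflection `t` is a right inversion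
of `w`. -/
noncomputable def titsSign (w t : W) : ℤˣ := (cs.titsRep w (t, 1)).2

theorem titsSign_wordProd (ω : List B) (t : W) :
    cs.titsSign (cs.wordProd ω) t =
      (-1) ^ (cs.leftInvSeq ω).count (cs.wordProd ω * t * (cs.wordProd ω)⁻¹) := by
  simp [titsSign, titsRep_wordProd_apply]

theorem titsRep_apply (w t : W) (ε : ℤˣ) :
    cs.titsRep w (t, ε) = (w * t * w⁻¹, cs.titsSign w t * ε) := by
  obtain ⟨ω, rfl⟩ := cs.wordProd_surjective w
  simp [titsSign_wordProd, titsRep_wordProd_apply]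

theorem titsSign_mul (x y t : W) :
    cs.titsSign (x * y) t = cs.titsSign x (y * t * y⁻¹) * cs.titsSign y t := by
  have h : cs.titsRep (x * y) (t, 1) = cs.titsRep x (cs.titsRep y (t, 1)) := by
    rw [map_mul, Equiv.Perm.mul_apply]
  rw [cs.titsRep_apply, cs.titsRep_apply y, cs.titsRep_apply] at h
  simpa only [mul_one] using congrArg Prod.snd h

theorem titsSign_one (t : W) : cs.titsSign 1 t = 1 := by
  simp [titsSign]

theorem titsSign_simple_self (i : B) : cs.titsSign (cs.simple i) (cs.simple i) = -1 := by
  simpa [cs.simple_mul_simple_cancel_right] using cs.titsSign_wordProd [i] (cs.simple i)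

theorem IsReflection.titsSign_self {t : W} (ht : cs.IsReflection t) : cs.titsSign t t = -1 := by
  obtain ⟨u, i, rfl⟩ := ht
  have hcancel : cs.titsSign u⁻¹ (u * cs.simple i * u⁻¹) * cs.titsSign u (cs.simple i) = 1 := by
    simpa [titsSign_one, mul_assoc] using (cs.titsSign_mul u⁻¹ u (cs.simple i)).symm
  calc cs.titsSign (u * cs.simple i * u⁻¹) (u * cs.simple i * u⁻¹)
      = cs.titsSign u (cs.simple i) * cs.titsSign (cs.simple i) (cs.simple i) *
          cs.titsSign u⁻¹ (u * cs.simple i * u⁻¹) := by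
        rw [cs.titsSign_mul, cs.titsSign_mul u]
        simp [mul_assoc, cs.inv_simple]
    _ = -1 := by rw [titsSign_simple_self, mul_neg_one, neg_mul, mul_comm, hcancel]

theorem length_mul_lt_of_titsSign_eq_neg_one {w t : W} (h : cs.titsSign w t = -1) :
    cs.length (w * t) < cs.length w := by
  obtain ⟨ω, hω, rfl⟩ := cs.exists_isReduced w
  rw [titsSign_wordProd] at h
  have hmem : cs.wordProd ω * t * (cs.wordProd ω)⁻¹ ∈ cs.leftInvSeq ω := by
    rw [← count_pos_iff, Nat.pos_iff_ne_zero]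
    intro h0
    simp [h0] at h
  obtain ⟨j, hj, hget⟩ := getElem_of_mem hmem
  have herase : cs.wordProd ω * t = cs.wordProd (ω.eraseIdx j) := by
    rw [← getD_leftInvSeq_mul_wordProd, getD_eq_getElem _ _ hj, hget]
    group
  rw [herase, hω]
  calc cs.length (cs.wordProd (ω.eraseIdx j)) ≤ (ω.eraseIdx j).length := cs.length_wordProd_le _
    _ < ω.length := by simp at hj; simp [length_eraseIdx_of_lt hj]; omega

theorem IsRightInversion.titsSign_eq_neg_one {w t : W} (ht : cs.IsRightInversion w t) :
    cs.titsSign w t = -1 := by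
  obtain ⟨hrefl, hlt⟩ := ht
  rcases Int.units_eq_one_or (cs.titsSign w t) with h | h
  · have hsign : cs.titsSign (w * t) t = -1 := by
      rw [titsSign_mul, hrefl.mul_self, one_mul, hrefl.inv, hrefl.titsSign_self, h, one_mul]
    have := cs.length_mul_lt_of_titsSign_eq_neg_one hsign
    rw [mul_assoc, hrefl.mul_self, mul_one] at this
    omega
  · exact h

/-- The strong exchange property. -/
theorem mem_leftInvSeq_of_isLeftInversion {ω : List B} {t : W}
    (ht : cs.IsLeftInversion (cs.wordProd ω) t) : t ∈ cs.leftInvSeq ω := by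
  set w := cs.wordProd ω
  have hright : cs.IsRightInversion w (w⁻¹ * t * w) := by
    refine ⟨by simpa using ht.1.conj w⁻¹, ?_⟩
    simpa [← mul_assoc] using ht.2
  have h := hright.titsSign_eq_neg_one
  rw [titsSign_wordProd, show w * (w⁻¹ * t * w) * w⁻¹ = t by group] at h
  rw [← count_pos_iff, Nat.pos_iff_ne_zero]
  intro h0
  simp [h0] at h

end TitsCocycle

noncomputable def geomRep : W →* Module.End ℂ (B →₀ ℂ) :=
  cs.lift ⟨M.geomReflection, M.isLiftable_geomReflection⟩

theorem geomRep_simple (i : B) : cs.geomRep (cs.simple i) = M.geomReflection i :=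
  cs.lift_apply_simple M.isLiftable_geomReflection i

theorem geomRep_wordProd_apply_apply_of_notMem {s : B} {ρ : List B} (hs : s ∉ ρ)
    (v : B →₀ ℂ) : cs.geomRep (cs.wordProd ρ) v s = v s := by
  induction ρ with
  | nil => simp
  | cons i ρ ih =>
    rw [List.mem_cons, not_or] at hs
    rw [wordProd_cons, map_mul, Module.End.mul_apply, geomRep_simple,
      M.geomReflection_apply_apply_of_ne hs.1, ih hs.2]

theorem simple_ne_wordProd_of_notMem_s5 {s : B} {ρ : List B} (hs : s ∉ ρ) :
    cs.simple s ≠ cs.wordProd ρ := by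
  intro h
  have := cs.geomRep_wordProd_apply_apply_of_notMem hs (Finsupp.single s 1)
  rw [← h, geomRep_simple, M.geomReflection_single_self] at this
  norm_num at this

theorem eq_two_of_simple_mul_mul_simple_eq_wordProd {s t : B} {ρ : List B} (hst : s ≠ t)
    (hs : s ∉ ρ) (h : cs.simple s * cs.simple t * cs.simple s = cs.wordProd ρ) : M s t = 2 := by
  refine M.eq_two_of_geomForm_eq_zero hst ?_
  have := cs.geomRep_wordProd_apply_apply_of_notMem hs (Finsupp.single s 1)
  rw [← h, map_mul, map_mul, Module.End.mul_apply, Module.End.mul_apply, geomRep_simple,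
    geomRep_simple, M.geomReflection_single_self, M.geomReflection_apply s,
    M.geomReflection_apply t] at this
  simp only [map_neg, map_sub, map_smul, M.geomCoroot_single, M.geomForm_self,
    M.geomForm_comm t s, smul_eq_mul, Finsupp.sub_apply, Finsupp.neg_apply, Finsupp.smul_apply,
    Finsupp.single_eq_same, Finsupp.single_eq_of_ne hst] at this
  exact pow_eq_zero_iff two_ne_zero |>.mp (by linear_combination (-1 / 4 : ℂ) * this)

theorem exists_subset_wordProd_eq_of_mem_leftInvSeq {ω : List B} {t : W}
    (ht : t ∈ cs.leftInvSeq ω) : ∃ ρ ⊆ ω, cs.wordProd ρ = t := by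
  induction ω generalizing t with
  | nil => simp at ht
  | cons i ω ih =>
    rcases mem_cons.1 ht with rfl | ht
    · exact ⟨[i], by simp, by simp⟩
    · obtain ⟨u, hu, rfl⟩ := mem_map.1 ht
      obtain ⟨ρ, hρ, rfl⟩ := ih hu
      refine ⟨i :: ρ ++ [i], ?_, ?_⟩
      · simpa [subset_def] using fun x hx ↦ (hx.imp_left fun h ↦ hρ h).symm
      · simp [wordProd_append, wordProd_cons, cs.inv_simple, mul_assoc]

theorem not_isLeftDescent_of_notMem {s : B} {ω : List B} (hs : s ∉ ω) :
    ¬cs.IsLeftDescent (cs.wordProd ω) s := by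
  intro hdesc
  rw [← isLeftInversion_simple_iff_isLeftDescent] at hdesc
  obtain ⟨ρ, hρ, heq⟩ :=
    cs.exists_subset_wordProd_eq_of_mem_leftInvSeq (cs.mem_leftInvSeq_of_isLeftInversion hdesc)
  exact cs.simple_ne_wordProd_of_notMem_s5 (fun h ↦ hs (hρ h)) heq.symm

theorem isReduced_cons_of_notMem {s : B} {ω : List B} (hs : s ∉ ω) (hω : cs.IsReduced ω) :
    cs.IsReduced (s :: ω) := by
  rw [IsReduced, wordProd_cons, cs.not_isLeftDescent_iff.1 (cs.not_isLeftDescent_of_notMem hs),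
    hω, length_cons]

theorem eq_two_of_commute_wordProd_cons {s t : B} {ω : List B} (hs : s ∉ t :: ω)
    (hred : cs.IsReduced (t :: ω)) (hcomm : Commute (cs.simple s) (cs.wordProd (t :: ω))) :
    M s t = 2 := by
  have hst : s ≠ t := fun h ↦ hs (h ▸ mem_cons_self)
  have hinv : cs.IsLeftInversion (cs.wordProd ((t :: ω).concat s))
      (cs.simple s * cs.simple t * cs.simple s) := by
    rw [wordProd_concat, ← hcomm.eq, ← wordProd_cons]
    exact cs.isLeftInversion_of_mem_leftInvSeq (cs.isReduced_cons_of_notMem hs hred)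
      (by simp [leftInvSeq, cs.inv_simple])
  have hmem := cs.mem_leftInvSeq_of_isLeftInversion hinv
  rw [leftInvSeq_concat, concat_eq_append, mem_append, mem_singleton, ← hcomm.eq,
    mul_inv_cancel_right] at hmem
  rcases hmem with hmem | hmem
  · obtain ⟨ρ, hρ, heq⟩ := cs.exists_subset_wordProd_eq_of_mem_leftInvSeq hmem
    exact cs.eq_two_of_simple_mul_mul_simple_eq_wordProd hst (fun h ↦ hs (hρ h)) heq.symm
  · rw [simple_mul_mul_simple_eq_simple_iff, ← wordProd_singleton] at hmem
    exact absurd hmem.symm (cs.simple_ne_wordProd_of_notMem_s5 (by simpa using hst))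

theorem commute_simple_of_eq_two {s t : B} (h : M s t = 2) :
    Commute (cs.simple s) (cs.simple t) := by
  have hsq := cs.simple_mul_simple_pow s t
  rw [h, sq, mul_eq_one_iff_eq_inv, mul_inv_rev, cs.inv_simple, cs.inv_simple] at hsq
  exact hsq

end CoxeterSystem

open CoxeterSystem List in
/-- **Lemma 5.2.** In a Coxeter system, if `s` is a generator and `w` is a reduced word in the
generators other than `s` representing an element commuting with `s`, then every letter of `w`
commutes with `s`, i.e. has Coxeter matrix entry `2` with `s`. -/
theorem letters_commute_of_reduced_commuting {B W : Type*} [Group W]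
    {M : CoxeterMatrix B} (cs : CoxeterSystem M W)
    (s : B) (w : List B) (hs : s ∉ w)
    (hred : cs.IsReduced w)
    (hcomm : Commute (cs.simple s) (cs.wordProd w)) :
    ∀ t ∈ w, M s t = 2 := by
  induction w with
  | nil => simp
  | cons t w ih =>
    have hst := cs.eq_two_of_commute_wordProd_cons hs hred hcomm
    have hcomm' : Commute (cs.simple s) (cs.wordProd w) := by
      rw [← cs.simple_mul_simple_cancel_left t (w := cs.wordProd w), ← wordProd_cons]
      exact (cs.commute_simple_of_eq_two hst).mul_right hcomm
    intro u hu
    rcases mem_cons.1 hu with rfl | hu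
    · exact hst
    · exact ih (fun h ↦ hs (mem_cons_of_mem t h)) (by simpa using hred.drop 1) hcomm' u hu
end

section
/- Let U be a set with a positive partial multiplication and let E = (U,0) ⊔ (Ū,1) be the associated bounded poset with interval-labeling λ given by: λ((u,0),(u·v,0)) = (v,0); λ((u,0),(v̄,1)) = (overline{v·u},1); λ((overline{v·u},1),(ū,1)) = (v,0). Then this interval-labeling is group-like: for any chain a ⪯ b ⪯ c in E, any two of the three labels λ(a,b), λ(b,c), λ(a,c) determine the third uniquely. -/
namespace PositivePartialMul

variable {U : Type*} (M : PositivePartialMul U)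

/-- The interval-labeling of the poset `E = (U,0) ⊔ (Ū,1)`, as a relation:
`IsLabel x y ℓ` means the interval from `x` to `y` is labeled by `ℓ ∈ E`.
The label of `[(u,0), (u·v,0)]` is `(v,0)`; the label of `[(u,0), (v̄,1)]` is
`(overline{v·u},1)`; the label of `[(overline{v·u},1), (ū,1)]` is `(v,0)`. -/
def IsLabel : U ⊕ U → U ⊕ U → U ⊕ U → Prop
  | .inl u, .inl v, .inl w => M.mul u w = some v
  | .inl u, .inr v, .inr z => M.mul v u = some z
  | .inr a, .inr b, .inl w => M.mul w b = some a
  | _, _, _ => False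

end PositivePartialMul

namespace PositivePartialMul

variable {U : Type*} (M : PositivePartialMul U)

theorem key {x y z x' y' z' : U} (h : M.mul x y = some z) (h' : M.mul x' y' = some z') :
    (x = x' → y = y' → z = z') ∧ (x = x' → z = z' → y = y') ∧ (y = y' → z = z' → x = x') := by
  refine ⟨?_, ?_, ?_⟩ <;> rintro rfl rfl
  · rw [h] at h'; exact Option.some.inj h'
  · exact M.left_cancel x y y' z h h'
  · exact M.right_cancel y x x' z h h'

theorem labels_mul {a b c ℓab ℓbc ℓac : U ⊕ U}
    (h1 : M.IsLabel a b ℓab) (h2 : M.IsLabel b c ℓbc) (h3 : M.IsLabel a c ℓac) :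
    ∃ (x y z : U), M.mul x y = some z ∧
      ((ℓab = .inl x ∧ ℓbc = .inl y ∧ ℓac = .inl z) ∨
       (ℓac = .inr x ∧ ℓab = .inl y ∧ ℓbc = .inr z) ∨
       (ℓbc = .inl x ∧ ℓac = .inr y ∧ ℓab = .inr z)) := by
  rcases a with u | u <;> rcases b with v | v <;> rcases c with w | w <;>
    rcases ℓab with x | x <;> rcases ℓbc with y | y <;> rcases ℓac with z | z <;>
    simp only [IsLabel] at h1 h2 h3 <;> try exact absurd h1 (by simp)
  all_goals try exact absurd h2 (by simp)
  all_goals try exact absurd h3 (by simp)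
  · -- lll : mul u x = v, mul v y = w, mul u z = w
    obtain ⟨xy, hxy, huxy⟩ := M.left_assoc u x y v w h1 h2
    exact ⟨x, y, z, (M.left_cancel u z xy w h3 huxy) ▸ hxy, Or.inl ⟨rfl, rfl, rfl⟩⟩
  · -- llr : mul u x = v, mul w v = y, mul w u = z
    obtain ⟨wu, hwu, hrest⟩ := M.right_assoc w u x v y h1 h2
    have : z = wu := Option.some.inj (h3 ▸ hwu)
    exact ⟨z, x, y, this ▸ hrest, Or.inr (Or.inl ⟨rfl, rfl, rfl⟩)⟩
  · -- lrr : mul v u = x, mul y w = v, mul w u = z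
    obtain ⟨wu, hwu, hrest⟩ := M.left_assoc y w u v x h2 h1
    have : z = wu := Option.some.inj (h3 ▸ hwu)
    exact ⟨y, z, x, this ▸ hrest, Or.inr (Or.inr ⟨rfl, rfl, rfl⟩)⟩
  · -- rrr : mul x v = u, mul y w = v, mul z w = u
    obtain ⟨xy, hxy, hrest⟩ := M.right_assoc x y w v u h2 h1
    exact ⟨x, y, z, (M.right_cancel w z xy u h3 hrest) ▸ hxy, Or.inl ⟨rfl, rfl, rfl⟩⟩

end PositivePartialMul

/-- **Lemma 3.4.** The interval-labeling of `E` is group-like: for chains `a ⪯ b ⪯ c` and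
`a' ⪯ b' ⪯ c'`, if two of the three pairs of corresponding labels agree, so does the third. -/
theorem E_labeling_groupLike {U : Type*} (M : PositivePartialMul U)
    (a b c a' b' c' : U ⊕ U)
    (hab : M.Erel a b) (hbc : M.Erel b c)
    (hab' : M.Erel a' b') (hbc' : M.Erel b' c')
    (ℓab ℓbc ℓac ℓab' ℓbc' ℓac' : U ⊕ U)
    (h1 : M.IsLabel a b ℓab) (h2 : M.IsLabel b c ℓbc) (h3 : M.IsLabel a c ℓac)
    (h1' : M.IsLabel a' b' ℓab') (h2' : M.IsLabel b' c' ℓbc') (h3' : M.IsLabel a' c' ℓac') :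
    (ℓab = ℓab' → ℓbc = ℓbc' → ℓac = ℓac') ∧
    (ℓab = ℓab' → ℓac = ℓac' → ℓbc = ℓbc') ∧
    (ℓbc = ℓbc' → ℓac = ℓac' → ℓab = ℓab') := by
  obtain ⟨x, y, z, h, hcase⟩ := M.labels_mul h1 h2 h3
  obtain ⟨x', y', z', h', hcase'⟩ := M.labels_mul h1' h2' h3'
  obtain ⟨k1, k2, k3⟩ := M.key h h'
  rcases hcase with ⟨e1, e2, e3⟩ | ⟨e1, e2, e3⟩ | ⟨e1, e2, e3⟩ <;>
    rcases hcase' with ⟨f1, f2, f3⟩ | ⟨f1, f2, f3⟩ | ⟨f1, f2, f3⟩ <;>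
    subst e1 e2 e3 f1 f2 f3 <;>
    refine ⟨fun p q => ?_, fun p q => ?_, fun p q => ?_⟩ <;>
    simp_all
end

section
/- Let F be the free group on a finite set S, and let U = S ∪ {e} with the partial multiplication where only products with e are defined (e·u = u·e = u). Then U satisfies the hypotheses of the Garside criterion: (U, ≤_L) and (U, ≤_R) are semilattices; joins interact correctly with the partial product; and for any a,b,u,v ∈ U with a·u, a·v, b·u, b·v all defined, either a,b have a right join or u,v have a left join. Consequently F × ℤ is a Garside group. -/
/-!
Put `height (g, n) = e g + 2 n` on `F × ℤ`, where `e` is the exponent sum. The monoid generated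
by `1`, `Δ = (1, 1)` and the atoms `(s, 0)`, `(s⁻¹, 1)` is the cone `|g| ≤ height (g, n)`, where
`|g|` is the reduced word length. So `x` left-divides `y` exactly when the tree distance from `x.1`
to `y.1` is at most `height y - height x`: left divisibility is the causal order of
(Cayley tree of `F`) × ℤ. Since geodesics in a tree are unique, the join of `1` and `y` lies above
the point of the geodesic from `1` to `y.1` where the two light cones meet; parity of heights
makes that point a vertex. Negating heights reverses the order and gives meets, and inversion
exchanges left and right divisibility. The simples are the elements between `1` and `Δ`, and the
length of a product of nontrivial simples is bounded by its height.

On `U` both orders are flat with bottom `e`, and the criterion's conditions are a case check.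
-/

section Garside

variable {G : Type*} [Group G]

/-- Left divisibility with respect to the positive monoid generated by `S`. -/
def DvdL (S : Set G) (a b : G) : Prop := ∃ c ∈ Submonoid.closure S, a * c = b

/-- Right divisibility with respect to the positive monoid generated by `S`. -/
def DvdR (S : Set G) (a b : G) : Prop := ∃ c ∈ Submonoid.closure S, c * a = b

/-- The relation `le` restricted to the subset `P` is a lattice: any two elements of `P`
have a join and a meet in `P`. -/
def IsLatticeOn {α : Type*} (P : Set α) (le : α → α → Prop) : Prop :=
  ∀ a ∈ P, ∀ b ∈ P,
    (∃ j ∈ P, le a j ∧ le b j ∧ ∀ x ∈ P, le a x → le b x → le j x) ∧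
    (∃ m ∈ P, le m a ∧ le m b ∧ ∀ x ∈ P, le x a → le x b → le x m)

/-- `(G, S, Δ)` is a Garside structure (Definition 2.5): `S` is a finite generating set,
lengths of expressions of positive elements as products of nontrivial elements of `S` are
bounded, the left and right divisibility orders on the positive monoid `G⁺` are lattices,
and `S` is the balanced interval between `1` and `Δ`. -/
def IsGarsideStructure (G : Type*) [Group G] (S : Finset G) (Δ : G) : Prop :=
  Subgroup.closure (S : Set G) = ⊤ ∧
  (∀ g ∈ Submonoid.closure (S : Set G), ∃ N : ℕ, ∀ l : List G,
      (∀ x ∈ l, x ∈ S ∧ x ≠ 1) → l.prod = g → l.length ≤ N) ∧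
  IsLatticeOn (Submonoid.closure (S : Set G) : Set G) (DvdL (S : Set G)) ∧
  IsLatticeOn (Submonoid.closure (S : Set G) : Set G) (DvdR (S : Set G)) ∧
  (S : Set G) = {g | g ∈ Submonoid.closure (S : Set G) ∧ DvdL (S : Set G) g Δ} ∧
  (S : Set G) = {g | g ∈ Submonoid.closure (S : Set G) ∧ DvdR (S : Set G) g Δ}

/-- A group is Garside if it admits a Garside structure. -/
def IsGarside (G : Type*) [Group G] : Prop :=
  ∃ (S : Finset G) (Δ : G), IsGarsideStructure G S Δ

end Garside

namespace FreeGarside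

variable {S : Type*}

/-- On `U = S ∪ {e}` (encoded as `Option S` with `none = e`), only products with the identity
are defined. -/
def Defined (u v : Option S) : Prop := u = none ∨ v = none

/-- The value of the partial product on `U = S ∪ {e}`: `e · u = u · e = u`. -/
def pmul (u v : Option S) : Option S := match u with | none => v | some s => some s

/-- The prefix order on `U = S ∪ {e}`. -/
def leL (u v : Option S) : Prop := ∃ w, Defined u w ∧ pmul u w = v

/-- The suffix order on `U = S ∪ {e}`. -/
def leR (u v : Option S) : Prop := ∃ w, Defined w u ∧ pmul w u = v

end FreeGarside

namespace FreeGarside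

variable {S : Type*} {a b u v w : Option S}

theorem leL_iff : leL a b ↔ a = none ∨ a = b := by
  constructor
  · rintro ⟨w, hd | rfl, rfl⟩
    · exact Or.inl hd
    · cases a <;> simp [pmul]
  · rintro (rfl | rfl)
    · exact ⟨b, Or.inl rfl, rfl⟩
    · exact ⟨none, Or.inr rfl, by cases a <;> rfl⟩

theorem leR_eq_leL : (leR : Option S → Option S → Prop) = leL := by
  ext a b
  rw [leL_iff]
  constructor
  · rintro ⟨w, rfl | rfl, rfl⟩
    · exact Or.inr rfl
    · exact Or.inl rfl
  · rintro (rfl | rfl)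
    · exact ⟨b, Or.inr rfl, by cases b <;> rfl⟩
    · exact ⟨none, Or.inl rfl, rfl⟩

theorem exists_isMeetOf_leL (a b : Option S) : ∃ m, IsMeetOf leL a b m := by
  simp only [IsMeetOf, leL_iff]
  by_cases h : a = b
  · exact ⟨a, by simp [h]⟩
  · exact ⟨none, by simp, by simp, fun x hxa hxb => by aesop⟩

theorem isJoinOf_leL_self (a : Option S) : IsJoinOf leL a a a :=
  ⟨leL_iff.2 (Or.inr rfl), leL_iff.2 (Or.inr rfl), fun _ h _ => h⟩

theorem Defined.of_isJoinOf_leL (hu : Defined a u) (hv : Defined a v) (h : IsJoinOf leL u v w) :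
    Defined a w := by
  rcases hu with rfl | rfl
  · exact Or.inl rfl
  rcases hv with rfl | rfl
  · exact Or.inl rfl
  have := h.2.2 none (leL_iff.2 (Or.inl rfl)) (leL_iff.2 (Or.inl rfl))
  exact Or.inr ((leL_iff.1 this).elim id id)

theorem exists_isJoinOf_leL_or_exists_isJoinOf_leL (hau : Defined a u) (hav : Defined a v)
    (hbu : Defined b u) (hbv : Defined b v) :
    (∃ j, IsJoinOf leL a b j) ∨ ∃ j, IsJoinOf leL u v j := by
  by_cases huv : u = v
  · exact Or.inr ⟨u, huv ▸ isJoinOf_leL_self u⟩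
  obtain ⟨rfl, rfl⟩ : a = none ∧ b = none := by
    unfold Defined at *
    aesop
  exact Or.inl ⟨none, isJoinOf_leL_self none⟩

end FreeGarside

section OrderTheory

variable {α β : Type*} {le : α → α → Prop}

theorem isLatticeOn_setOf_le (o : α) (htrans : ∀ {a b c}, le a b → le b c → le a c)
    (hjoin : ∀ a b, ∃ j, IsJoinOf le a b j) (hmeet : ∀ a b, ∃ m, IsMeetOf le a b m) :
    IsLatticeOn {x | le o x} le := by
  intro a ha b hb
  obtain ⟨j, haj, hbj, hj⟩ := hjoin a b
  obtain ⟨m, hma, hmb, hm⟩ := hmeet a b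
  exact ⟨⟨j, htrans ha haj, haj, hbj, fun x _ => hj x⟩,
    ⟨m, hm o ha hb, hma, hmb, fun x _ => hm x⟩⟩

variable {le' : β → β → Prop} {f : α → β}

theorem exists_isMeetOf_of_antitone (hf : Function.Surjective f)
    (hle : ∀ a b, le a b ↔ le' (f b) (f a)) (h : ∀ a b, ∃ j, IsJoinOf le a b j) (a b : β) :
    ∃ m, IsMeetOf le' a b m := by
  obtain ⟨a, rfl⟩ := hf a
  obtain ⟨b, rfl⟩ := hf b
  obtain ⟨j, haj, hbj, hj⟩ := h a b
  refine ⟨f j, (hle _ _).1 haj, (hle _ _).1 hbj, fun z hza hzb => ?_⟩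
  obtain ⟨z, rfl⟩ := hf z
  exact (hle _ _).1 (hj z ((hle _ _).2 hza) ((hle _ _).2 hzb))

theorem exists_isJoinOf_of_antitone (hf : Function.Surjective f)
    (hle : ∀ a b, le a b ↔ le' (f b) (f a)) (h : ∀ a b, ∃ m, IsMeetOf le a b m) (a b : β) :
    ∃ j, IsJoinOf le' a b j := by
  obtain ⟨a, rfl⟩ := hf a
  obtain ⟨b, rfl⟩ := hf b
  obtain ⟨m, hma, hmb, hm⟩ := h a b
  refine ⟨f m, (hle _ _).1 hma, (hle _ _).1 hmb, fun z haz hbz => ?_⟩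
  obtain ⟨z, rfl⟩ := hf z
  exact (hle _ _).1 (hm z ((hle _ _).2 haz) ((hle _ _).2 hbz))

end OrderTheory

section Divisibility

variable {G : Type*} [Group G] {S : Set G} {a b c : G}

theorem dvdL_iff_inv_mul_mem : DvdL S a b ↔ a⁻¹ * b ∈ Submonoid.closure S :=
  ⟨fun ⟨_, hc, h⟩ => by rwa [← h, inv_mul_cancel_left], fun h => ⟨_, h, mul_inv_cancel_left a b⟩⟩

theorem dvdR_iff_mul_inv_mem : DvdR S a b ↔ b * a⁻¹ ∈ Submonoid.closure S :=
  ⟨fun ⟨_, hc, h⟩ => by rwa [← h, mul_inv_cancel_right], fun h => ⟨_, h, inv_mul_cancel_right b a⟩⟩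

theorem dvdR_iff_dvdL_inv : DvdR S a b ↔ DvdL S b⁻¹ a⁻¹ := by
  rw [dvdR_iff_mul_inv_mem, dvdL_iff_inv_mul_mem, inv_inv]

theorem DvdL.trans (hab : DvdL S a b) (hbc : DvdL S b c) : DvdL S a c := by
  rw [dvdL_iff_inv_mul_mem] at *
  simpa [mul_assoc] using mul_mem hab hbc

theorem DvdR.trans (hab : DvdR S a b) (hbc : DvdR S b c) : DvdR S a c := by
  rw [dvdR_iff_dvdL_inv] at *
  exact hbc.trans hab

theorem dvdL_one_left : DvdL S 1 a ↔ a ∈ Submonoid.closure S := by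
  rw [dvdL_iff_inv_mul_mem, inv_one, one_mul]

theorem dvdR_one_left : DvdR S 1 a ↔ a ∈ Submonoid.closure S := by
  rw [dvdR_iff_mul_inv_mem, inv_one, mul_one]

theorem dvdL_mul_left_iff (g : G) : DvdL S (g * a) (g * b) ↔ DvdL S a b := by
  simp only [dvdL_iff_inv_mul_mem, mul_inv_rev, mul_assoc, inv_mul_cancel_left]

theorem dvdR_iff_dvdL_of_commute (h : Commute a⁻¹ b) : DvdR S a b ↔ DvdL S a b := by
  rw [dvdR_iff_mul_inv_mem, dvdL_iff_inv_mul_mem, h.eq]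

theorem exists_isJoinOf_dvdL_of_one (h : ∀ y, ∃ j, IsJoinOf (DvdL S) 1 y j) (x y : G) :
    ∃ j, IsJoinOf (DvdL S) x y j := by
  obtain ⟨j, hxj, hyj, hmin⟩ := h (x⁻¹ * y)
  refine ⟨x * j, ?_, ?_, fun z hxz hyz => ?_⟩
  · rwa [← dvdL_mul_left_iff x, mul_one] at hxj
  · rwa [← dvdL_mul_left_iff x, mul_inv_cancel_left] at hyj
  · rw [← mul_inv_cancel_left x z, dvdL_mul_left_iff]
    refine hmin _ ?_ ?_
    · rwa [← dvdL_mul_left_iff x, mul_one, mul_inv_cancel_left]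
    · rwa [← dvdL_mul_left_iff x, mul_inv_cancel_left, mul_inv_cancel_left]

theorem isLatticeOn_closure_dvdL (hjoin : ∀ a b, ∃ j, IsJoinOf (DvdL S) a b j)
    (hmeet : ∀ a b, ∃ m, IsMeetOf (DvdL S) a b m) :
    IsLatticeOn (Submonoid.closure S : Set G) (DvdL S) := by
  convert isLatticeOn_setOf_le 1 DvdL.trans hjoin hmeet
  exact Set.ext fun _ => dvdL_one_left.symm

theorem isLatticeOn_closure_dvdR (hjoin : ∀ a b, ∃ j, IsJoinOf (DvdR S) a b j)
    (hmeet : ∀ a b, ∃ m, IsMeetOf (DvdR S) a b m) :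
    IsLatticeOn (Submonoid.closure S : Set G) (DvdR S) := by
  convert isLatticeOn_setOf_le 1 DvdR.trans hjoin hmeet
  exact Set.ext fun _ => dvdR_one_left.symm

theorem closure_eq_top_of_forall_mul_pow_mem {Δ : G} (hΔ : Δ ∈ Submonoid.closure S)
    (h : ∀ x, ∃ n : ℕ, x * Δ ^ n ∈ Submonoid.closure S) : Subgroup.closure S = ⊤ := by
  have hle : Submonoid.closure S ≤ (Subgroup.closure S).toSubmonoid :=
    Submonoid.closure_le.2 Subgroup.subset_closure
  refine eq_top_iff.2 fun x _ => ?_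
  obtain ⟨n, hn⟩ := h x
  rw [← mul_inv_cancel_right x (Δ ^ n)]
  exact mul_mem (hle hn) (inv_mem (pow_mem (hle hΔ) n))

end Divisibility

namespace FreeGroup

variable {α : Type*}

def exponentSum : FreeGroup α →* Multiplicative ℤ := lift fun _ => Multiplicative.ofAdd 1

theorem even_length_add_exponentSum_mk (L : List (α × Bool)) :
    Even ((L.length : ℤ) + (exponentSum (mk L)).toAdd) := by
  induction L with
  | nil => simp [← one_eq_mk]
  | cons p L ih =>
    rw [← List.singleton_append, ← mul_mk, MonoidHom.map_mul, toAdd_mul]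
    have hp : Odd (exponentSum (mk [p])).toAdd := by
      obtain ⟨s, _ | _⟩ := p <;> simp [exponentSum, lift_mk]
    obtain ⟨m, hm⟩ := ih
    obtain ⟨k, hk⟩ := hp
    exact ⟨m + k + 1, by simp only [List.length_append, List.length_singleton]; push_cast; omega⟩

variable [DecidableEq α] {L u v : List (α × Bool)}

theorem even_norm_add_exponentSum (x : FreeGroup α) :
    Even ((norm x : ℤ) + (exponentSum x).toAdd) := by
  simpa only [mk_toWord, norm] using even_length_add_exponentSum_mk x.toWord

theorem norm_mk_of_isReduced (h : IsReduced L) : norm (mk L) = L.length := by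
  rw [norm, toWord_mk, h.reduce_eq]

theorem norm_mk_mul_of_isReduced {x : FreeGroup α} (h : IsReduced (L ++ x.toWord)) :
    norm (mk L * x) = L.length + norm x := by
  conv_lhs => rw [← mk_toWord (x := x), mul_mk, norm_mk_of_isReduced h]
  exact List.length_append

theorem IsReduced.invRev (h : IsReduced L) : IsReduced (invRev L) := by
  simpa only [toWord_inv, toWord_mk, h.reduce_eq] using isReduced_toWord (x := (mk L)⁻¹)

/-- `mk u` lies on the geodesic from `1` to `mk (u ++ v)`; in a tree it then lies on the geodesic
from one of these two ends to any given point `mk u * x`. -/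
theorem norm_mk_mul_or_norm_inv_mk_mul (h : IsReduced (u ++ v)) (x : FreeGroup α) :
    norm (mk u * x) = u.length + norm x ∨ norm ((mk v)⁻¹ * x) = v.length + norm x := by
  by_cases hux : IsReduced (u ++ x.toWord)
  · exact Or.inl (norm_mk_mul_of_isReduced hux)
  right
  have hv : IsReduced v := h.infix (List.suffix_append u v).isInfix
  rw [inv_mk, ← invRev_length (L₁ := v)]
  apply norm_mk_mul_of_isReduced
  rw [IsReduced, List.isChain_append] at h hux ⊢
  have hx : List.IsChain _ x.toWord := isReduced_toWord
  refine ⟨hv.invRev, hx, ?_⟩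
  simp only [invRev, List.getLast?_reverse, List.head?_map, Option.mem_def,
    Option.map_eq_some_iff]
  rintro _ ⟨a, ha, rfl⟩ b hb hab
  -- the first letter of `x` inverts the last letter of `u`, which the first letter of `v` does not
  simp only [h.1, hx, true_and, not_forall] at hux
  obtain ⟨c, hc, d, hd, hcd, hne⟩ := hux
  obtain rfl : d = b := Option.some_injective _ (hd.symm.trans hb)
  have hca : c.2 = a.2 := h.2.2 c hc a ha (hcd.trans hab.symm)
  rw [← hca]
  exact Bool.not_eq.mpr hne

end FreeGroup

namespace FreeGarside

open FreeGroup Multiplicative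

variable {S : Type*}

def height (x : FreeGroup S × Multiplicative ℤ) : ℤ := toAdd (exponentSum x.1) + 2 * toAdd x.2

@[simp] theorem height_one : height (1 : FreeGroup S × Multiplicative ℤ) = 0 := by
  simp [height]

@[simp] theorem height_mul (x y : FreeGroup S × Multiplicative ℤ) :
    height (x * y) = height x + height y := by
  simp only [height, Prod.fst_mul, Prod.snd_mul, MonoidHom.map_mul, toAdd_mul]
  ring

@[simp] theorem height_inv (x : FreeGroup S × Multiplicative ℤ) : height x⁻¹ = -height x := by
  simp only [height, Prod.fst_inv, Prod.snd_inv, MonoidHom.map_inv, toAdd_inv]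
  ring

@[simp] theorem height_pow (x : FreeGroup S × Multiplicative ℤ) (n : ℕ) :
    height (x ^ n) = n * height x := by
  induction n with
  | zero => simp
  | succ n ih => rw [pow_succ, height_mul, ih]; push_cast; ring

theorem eq_of_fst_eq_of_height_eq {x y : FreeGroup S × Multiplicative ℤ} (h₁ : x.1 = y.1)
    (h₂ : height x = height y) : x = y := by
  refine Prod.ext h₁ (toAdd.injective ?_)
  simp only [height, h₁] at h₂
  omega

def delta : FreeGroup S × Multiplicative ℤ := (1, ofAdd 1)

@[simp] theorem delta_fst : (delta : FreeGroup S × Multiplicative ℤ).1 = 1 := rfl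

@[simp] theorem height_delta : height (delta : FreeGroup S × Multiplicative ℤ) = 2 := by
  simp [height, delta]

theorem commute_delta (x : FreeGroup S × Multiplicative ℤ) : Commute x delta :=
  Prod.ext (Commute.one_right _) (Commute.all _ _)

theorem exists_eq_delta_pow {x : FreeGroup S × Multiplicative ℤ} (h₁ : x.1 = 1)
    (h₂ : 0 ≤ height x) : ∃ n : ℕ, x = delta ^ n := by
  have hx : height x = 2 * toAdd x.2 := by simp [height, h₁]
  refine ⟨(toAdd x.2).toNat, eq_of_fst_eq_of_height_eq (by simp [h₁]) ?_⟩
  simp only [height_pow, height_delta, hx]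
  omega

def atom (p : S × Bool) : FreeGroup S × Multiplicative ℤ := (mk [p], ofAdd (cond p.2 0 1))

@[simp] theorem atom_fst (p : S × Bool) : (atom p).1 = mk [p] := rfl

@[simp] theorem height_atom (p : S × Bool) : height (atom p) = 1 := by
  obtain ⟨s, _ | _⟩ := p <;> simp [height, atom, exponentSum, lift_mk]

theorem exists_fst_eq_height_eq (L : List (S × Bool)) :
    ∃ x ∈ Submonoid.closure (Set.range atom), x.1 = mk L ∧ height x = L.length := by
  induction L with
  | nil => exact ⟨1, one_mem _, by simp [← one_eq_mk]⟩
  | cons p L ih =>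
    obtain ⟨x, hx, hx₁, hxh⟩ := ih
    refine ⟨atom p * x, mul_mem (Submonoid.subset_closure ⟨p, rfl⟩) hx, ?_, ?_⟩
    · rw [Prod.fst_mul, hx₁, atom_fst, mul_mk, List.singleton_append]
    · simp [hxh, add_comm]

def reflectHeight (x : FreeGroup S × Multiplicative ℤ) : FreeGroup S × Multiplicative ℤ :=
  (x.1, (x.2 * exponentSum x.1)⁻¹)

@[simp] theorem reflectHeight_fst (x : FreeGroup S × Multiplicative ℤ) :
    (reflectHeight x).1 = x.1 := rfl

@[simp] theorem height_reflectHeight (x : FreeGroup S × Multiplicative ℤ) :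
    height (reflectHeight x) = -height x := by
  simp only [height, reflectHeight, toAdd_inv, toAdd_mul]
  ring

theorem reflectHeight_involutive :
    Function.Involutive (reflectHeight : FreeGroup S × Multiplicative ℤ → _) := fun x => by
  simp [reflectHeight, mul_comm]

variable [DecidableEq S]

theorem even_height_sub_norm (x : FreeGroup S × Multiplicative ℤ) :
    Even (height x - norm x.1) := by
  obtain ⟨k, hk⟩ := even_norm_add_exponentSum x.1
  exact ⟨k - norm x.1 + toAdd x.2, by simp only [height]; omega⟩

def positiveCone : Submonoid (FreeGroup S × Multiplicative ℤ) where
  carrier := {x | (norm x.1 : ℤ) ≤ height x}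
  one_mem' := by simp
  mul_mem' {x y} hx hy := by
    have := norm_mul_le x.1 y.1
    simp only [Set.mem_ofPred_eq, Prod.fst_mul, height_mul] at *
    omega

theorem mem_positiveCone {x : FreeGroup S × Multiplicative ℤ} :
    x ∈ positiveCone ↔ (norm x.1 : ℤ) ≤ height x := Iff.rfl

theorem eq_one_of_mem_positiveCone_of_height_eq_zero {x : FreeGroup S × Multiplicative ℤ}
    (hx : x ∈ positiveCone) (h : height x = 0) : x = 1 := by
  rw [mem_positiveCone, h] at hx
  exact eq_of_fst_eq_of_height_eq (norm_eq_zero.1 (by omega)) (by simp [h])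

variable [Fintype S]

variable (S) in
def simples : Finset (FreeGroup S × Multiplicative ℤ) :=
  insert 1 (insert delta (Finset.univ.image atom))

theorem mem_simples_iff {x : FreeGroup S × Multiplicative ℤ} :
    x ∈ simples S ↔ (norm x.1 : ℤ) ≤ height x ∧ height x ≤ 2 - norm x.1 := by
  constructor
  · simp only [simples, Finset.mem_insert, Finset.mem_image, Finset.mem_univ, true_and]
    rintro (rfl | rfl | ⟨p, rfl⟩)
    · simp
    · simp
    · simp [norm_mk_of_isReduced IsReduced.singleton]
  rintro ⟨hlow, hhigh⟩
  obtain ⟨k, hk⟩ := even_height_sub_norm x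
  simp only [simples, Finset.mem_insert, Finset.mem_image, Finset.mem_univ, true_and]
  rcases Nat.eq_zero_or_pos (norm x.1) with h0 | hpos
  · have hx₁ : x.1 = 1 := norm_eq_zero.1 h0
    have : height x = 0 ∨ height x = 2 := by omega
    refine this.imp (fun h => ?_) (fun h => Or.inl ?_) <;>
      exact eq_of_fst_eq_of_height_eq hx₁ (by simp [h])
  · have : x.1.toWord.length = 1 := by unfold FreeGroup.norm at *; omega
    obtain ⟨p, hp⟩ := List.length_eq_one_iff.1 this
    refine Or.inr (Or.inr ⟨p, eq_of_fst_eq_of_height_eq ?_ ?_⟩)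
    · rw [atom_fst, ← hp, mk_toWord]
    · rw [height_atom]; omega

theorem closure_simples :
    Submonoid.closure (simples S : Set (FreeGroup S × Multiplicative ℤ)) = positiveCone := by
  apply le_antisymm
  · exact Submonoid.closure_le.2 fun x hx => mem_positiveCone.2 (mem_simples_iff.1 hx).1
  intro x hx
  rw [mem_positiveCone] at hx
  obtain ⟨y, hy, hy₁, hyh⟩ := exists_fst_eq_height_eq x.1.toWord
  have hyx : 0 ≤ height (y⁻¹ * x) := by
    rw [height_mul, height_inv, hyh]
    unfold FreeGroup.norm at hx
    omega
  obtain ⟨n, hn⟩ := exists_eq_delta_pow (by simp [hy₁, mk_toWord]) hyx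
  rw [← mul_inv_cancel_left y x, hn]
  refine mul_mem (Submonoid.closure_mono ?_ hy) (pow_mem (Submonoid.subset_closure ?_) n)
  · rintro _ ⟨p, rfl⟩
    simp [simples]
  · simp [simples]

theorem dvdL_simples_iff {x y : FreeGroup S × Multiplicative ℤ} :
    DvdL (simples S : Set _) x y ↔ (norm (x.1⁻¹ * y.1) : ℤ) ≤ height y - height x := by
  rw [dvdL_iff_inv_mul_mem, closure_simples, mem_positiveCone]
  simp only [Prod.fst_mul, Prod.fst_inv, height_mul, height_inv]
  omega

theorem exists_isJoinOf_one (y : FreeGroup S × Multiplicative ℤ) :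
    ∃ j, IsJoinOf (DvdL (simples S : Set _)) 1 y j := by
  simp only [IsJoinOf, dvdL_simples_iff, Prod.fst_one, inv_one, one_mul, height_one, sub_zero]
  by_cases hy : (norm y.1 : ℤ) ≤ height y
  · exact ⟨y, hy, by simp, fun z _ h => h⟩
  by_cases hy' : (norm y.1 : ℤ) ≤ -height y
  · exact ⟨1, by simp, by simpa using hy', fun z h _ => by simpa using h⟩
  obtain ⟨k, hk⟩ := even_height_sub_norm y
  set w := y.1.toWord
  set i := (norm y.1 + k).toNat
  have hw : IsReduced (w.take i ++ w.drop i) := (w.take_append_drop i).symm ▸ isReduced_toWord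
  have hy₁ : y.1 = mk (w.take i) * mk (w.drop i) := by rw [mul_mk, w.take_append_drop, mk_toWord]
  have hw_len : w.length = norm y.1 := rfl
  have hi : i ≤ w.length := by omega
  have hu : norm (mk (w.take i)) = i := by
    rw [norm_mk_of_isReduced (hw.infix (List.prefix_append _ _).isInfix), List.length_take,
      min_eq_left hi]
  have hv : norm (mk (w.drop i)) = w.length - i := by
    rw [norm_mk_of_isReduced (hw.infix (List.suffix_append _ _).isInfix), List.length_drop]
  obtain ⟨j, -, hj₁, hjh⟩ := exists_fst_eq_height_eq (w.take i)
  rw [List.length_take, min_eq_left hi] at hjh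
  refine ⟨j, ?_, ?_, fun z hz hyz => ?_⟩
  · rw [hj₁, hjh, hu]
  · rw [hj₁, hy₁, mul_inv_rev, inv_mul_cancel_right, norm_inv_eq, hjh, hv]
    omega
  · rw [hj₁, hjh]
    rcases norm_mk_mul_or_norm_inv_mk_mul hw ((mk (w.take i))⁻¹ * z.1) with h | h
    · rw [mul_inv_cancel_left, List.length_take, min_eq_left hi] at h
      omega
    · rw [← mul_assoc, ← mul_inv_rev, ← hy₁, List.length_drop] at h
      omega

theorem dvdL_reflectHeight_iff {x y : FreeGroup S × Multiplicative ℤ} :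
    DvdL (simples S : Set _) (reflectHeight x) (reflectHeight y) ↔
      DvdL (simples S : Set _) y x := by
  rw [dvdL_simples_iff, dvdL_simples_iff, height_reflectHeight, height_reflectHeight,
    reflectHeight_fst, reflectHeight_fst, ← norm_inv_eq, mul_inv_rev, inv_inv]
  omega

theorem exists_isJoinOf_dvdL (x y : FreeGroup S × Multiplicative ℤ) :
    ∃ j, IsJoinOf (DvdL (simples S : Set _)) x y j :=
  exists_isJoinOf_dvdL_of_one exists_isJoinOf_one x y

theorem exists_isMeetOf_dvdL (x y : FreeGroup S × Multiplicative ℤ) :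
    ∃ m, IsMeetOf (DvdL (simples S : Set _)) x y m :=
  exists_isMeetOf_of_antitone reflectHeight_involutive.surjective
    (fun _ _ => dvdL_reflectHeight_iff.symm) exists_isJoinOf_dvdL x y

theorem exists_isJoinOf_dvdR (x y : FreeGroup S × Multiplicative ℤ) :
    ∃ j, IsJoinOf (DvdR (simples S : Set _)) x y j :=
  exists_isJoinOf_of_antitone inv_surjective
    (fun _ _ => by rw [dvdR_iff_dvdL_inv, inv_inv, inv_inv]) exists_isMeetOf_dvdL x y

theorem exists_isMeetOf_dvdR (x y : FreeGroup S × Multiplicative ℤ) :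
    ∃ m, IsMeetOf (DvdR (simples S : Set _)) x y m :=
  exists_isMeetOf_of_antitone inv_surjective
    (fun _ _ => by rw [dvdR_iff_dvdL_inv, inv_inv, inv_inv]) exists_isJoinOf_dvdL x y

theorem simples_eq_setOf_dvdL_delta :
    (simples S : Set (FreeGroup S × Multiplicative ℤ)) =
      {x | x ∈ Submonoid.closure (simples S : Set _) ∧ DvdL (simples S : Set _) x delta} := by
  ext x
  rw [Set.mem_ofPred_eq, closure_simples, mem_positiveCone, dvdL_simples_iff, Finset.mem_coe,
    mem_simples_iff, delta_fst, mul_one, norm_inv_eq, height_delta]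
  constructor <;> rintro ⟨h₁, h₂⟩ <;> exact ⟨h₁, by omega⟩

theorem simples_eq_setOf_dvdR_delta :
    (simples S : Set (FreeGroup S × Multiplicative ℤ)) =
      {x | x ∈ Submonoid.closure (simples S : Set _) ∧ DvdR (simples S : Set _) x delta} := by
  simp only [dvdR_iff_dvdL_of_commute (commute_delta _)]
  exact simples_eq_setOf_dvdL_delta

theorem closure_simples_eq_top :
    Subgroup.closure (simples S : Set (FreeGroup S × Multiplicative ℤ)) = ⊤ := by
  refine closure_eq_top_of_forall_mul_pow_mem (Δ := delta)
    (Submonoid.subset_closure (by simp [simples])) fun x => ⟨(norm x.1 - height x).toNat, ?_⟩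
  rw [closure_simples, mem_positiveCone]
  simp only [Prod.fst_mul, Prod.pow_fst, delta_fst, one_pow, mul_one, height_mul, height_pow,
    height_delta]
  omega

theorem length_le_height_prod {l : List (FreeGroup S × Multiplicative ℤ)}
    (hl : ∀ x ∈ l, x ∈ simples S ∧ x ≠ 1) : (l.length : ℤ) ≤ height l.prod := by
  induction l with
  | nil => simp
  | cons x l ih =>
    obtain ⟨hx, hx1⟩ := hl x List.mem_cons_self
    have hcone : x ∈ positiveCone := mem_positiveCone.2 (mem_simples_iff.1 hx).1
    have hpos : 0 < height x := lt_of_le_of_ne (le_trans (by positivity) hcone) fun h =>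
      hx1 (eq_one_of_mem_positiveCone_of_height_eq_zero hcone h.symm)
    have := ih fun y hy => hl y (List.mem_cons_of_mem x hy)
    rw [List.prod_cons, height_mul, List.length_cons]
    omega

end FreeGarside

open FreeGarside in
theorem isGarside_freeGroup_prod_int {S : Type*} [Finite S] :
    IsGarside (FreeGroup S × Multiplicative ℤ) := by
  classical
  have := Fintype.ofFinite S
  refine ⟨simples S, delta, closure_simples_eq_top, fun g _ => ⟨(height g).toNat, ?_⟩,
    isLatticeOn_closure_dvdL exists_isJoinOf_dvdL exists_isMeetOf_dvdL,
    isLatticeOn_closure_dvdR exists_isJoinOf_dvdR exists_isMeetOf_dvdR,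
    simples_eq_setOf_dvdL_delta, simples_eq_setOf_dvdR_delta⟩
  rintro l hl rfl
  have := length_le_height_prod hl
  omega

open FreeGarside in
/-- **Remark after Theorem 3.9.** For the free group `F` on a finite set `S`, the set
`U = S ∪ {e}` with the trivial positive partial multiplication satisfies all the hypotheses
of the Garside criterion (Theorem 3.9), and consequently `F × ℤ` is a Garside group. -/
theorem freeGroup_prod_int_garside (S : Type*) [Fintype S] :
    ((∀ u v : Option S, ∃ m, IsMeetOf (leL (S := S)) u v m) ∧
     (∀ u v : Option S, ∃ m, IsMeetOf (leR (S := S)) u v m)) ∧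
    (∀ a u v w : Option S, Defined a u → Defined a v →
      IsJoinOf (leL (S := S)) u v w → Defined a w) ∧
    (∀ a u v w : Option S, Defined u a → Defined v a →
      IsJoinOf (leR (S := S)) u v w → Defined w a) ∧
    (∀ a b u v : Option S, Defined a u → Defined a v → Defined b u → Defined b v →
      (∃ j, IsJoinOf (leR (S := S)) a b j) ∨ (∃ j, IsJoinOf (leL (S := S)) u v j)) ∧
    IsGarside (FreeGroup S × Multiplicative ℤ) := by
  rw [leR_eq_leL]
  refine ⟨⟨exists_isMeetOf_leL, exists_isMeetOf_leL⟩, fun _ _ _ _ => Defined.of_isJoinOf_leL,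
    fun _ _ _ _ hu hv h => (Defined.of_isJoinOf_leL hu.symm hv.symm h).symm,
    fun _ _ _ _ => exists_isJoinOf_leL_or_exists_isJoinOf_leL, isGarside_freeGroup_prod_int⟩
end
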